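/- arXiv:2406.00354 — 7 statements merged into one kernel-verified Lean document; each statement's English description precedes it below -/
import Mathlib

section
/- Let g : ℝ × [0,∞) → [0,∞) be non-decreasing and locally Lipschitz in each of its variables with g(0,0) = 0, and assume that ∫₁^∞ s^{−1−p} g(s, s^{p/q}) ds < ∞ for some p, q > 0. Let u : Ω → ℝ and v : Ω → [0,∞) be measurable functions, and assume there exist constants C_u, C_v > 0 such that e_u(s) ≤ C_u s^{−p} and e_v(s) ≤ C_v s^{−q} for all s > 0. Then for every s₀ > 0 one has ∫_Ω g(u,v) φ dx ≤ ∫_{E_u(s₀)^c ∩ E_v(s₀^{p/q})^c} g(u,v) φ dx + 2p (C_u + C_v) ∫_{s₀}^∞ s^{−1−p} g(s, s^{p/q}) ds. -/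
/-!
Put `w = max (|u|, v^{q/p})` and `G s = g(s, s^{p/q})`. Off the set `{|u| ≤ s₀, |v| ≤ s₀^{p/q}}`
one has `w > s₀` and `g(u, v) ≤ G(w)`, while `w` inherits the tail bound
`e_w(s) ≤ (C_u + C_v) s^{-p}`. On the geometric grid `θ_k = r^k s₀` (`r > 1`), `G(w)` is dominated
by the step function `G(θ_0) + Σ_k (G(θ_{k+1}) - G(θ_k)) 1{w > θ_k}`, whose integral involves
only the tails `e_w(θ_k)`; these are at most `(C_u + C_v) r^p` times the tails of the measure
`p s^{-1-p} ds` one grid step later, and against that measure the shifted step function lies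
below `G`. Taking `r = 2^{1/p}` gives the constant `2`.
-/

open MeasureTheory Set
open scoped ENNReal

noncomputable def gridStep (θ : ℕ → ℝ) (f : ℕ → ℝ≥0∞) (t : ℝ) : ℝ≥0∞ :=
  f 0 + ∑' k, if θ k < t then f (k + 1) - f k else 0

section GridStep

variable {θ : ℕ → ℝ} {f : ℕ → ℝ≥0∞}

lemma exists_lt_and_le_succ {t : ℝ} (h0 : θ 0 < t) (hθ : ∃ n, t ≤ θ n) :
    ∃ n, θ n < t ∧ t ≤ θ (n + 1) := by
  by_contra! h
  obtain ⟨n, hn⟩ := hθ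
  have hlt : ∀ k, θ k < t := fun k => by
    induction k with
    | zero => exact h0
    | succ k ih => exact h k ih
  exact (hlt n).not_ge hn

lemma gridStep_eq (hθ : Monotone θ) (hf : Monotone f) {n : ℕ} {t : ℝ}
    (hlt : θ n < t) (hle : t ≤ θ (n + 1)) : gridStep θ f t = f (n + 1) := by
  have hsum : (∑' k, if θ k < t then f (k + 1) - f k else 0) =
      ∑ k ∈ Finset.range (n + 1), (f (k + 1) - f k) := by
    rw [tsum_eq_sum (s := Finset.range (n + 1))]
    · refine Finset.sum_congr rfl fun k hk => if_pos ?_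
      exact (hθ (Nat.lt_succ_iff.mp (Finset.mem_range.mp hk))).trans_lt hlt
    · intro k hk
      exact if_neg (not_lt.mpr (hle.trans (hθ (by simpa using hk))))
  have htelescope : ∀ m, f 0 + ∑ k ∈ Finset.range m, (f (k + 1) - f k) = f m := fun m => by
    induction m with
    | zero => simp
    | succ m ih => rw [Finset.sum_range_succ, ← add_assoc, ih, add_tsub_cancel_of_le (hf m.le_succ)]
  rw [gridStep, hsum, htelescope]

lemma le_gridStep (hθ : Monotone θ) (hθ_unbdd : ∀ t, ∃ n, t ≤ θ n) {G : ℝ → ℝ≥0∞}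
    (hG : MonotoneOn G (Ici (θ 0))) {t : ℝ} (ht : θ 0 < t) :
    G t ≤ gridStep θ (fun k => G (θ k)) t := by
  obtain ⟨n, hlt, hle⟩ := exists_lt_and_le_succ ht (hθ_unbdd t)
  rw [gridStep_eq hθ (fun i j hij => hG (hθ i.zero_le) (hθ j.zero_le) (hθ hij)) hlt hle]
  exact hG ht.le (hθ (Nat.zero_le _)) hle

lemma gridStep_succ_le (hθ : Monotone θ) (hθ_unbdd : ∀ t, ∃ n, t ≤ θ n) {G : ℝ → ℝ≥0∞}
    (hG : MonotoneOn G (Ici (θ 0))) {t : ℝ} (ht : θ 1 < t) :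
    gridStep (fun k => θ (k + 1)) (fun k => G (θ k)) t ≤ G t := by
  obtain ⟨n, hlt, hle⟩ := exists_lt_and_le_succ (θ := fun k => θ (k + 1)) ht
    ((hθ_unbdd t).imp fun n hn => hn.trans (hθ n.le_succ))
  rw [gridStep_eq (θ := fun k => θ (k + 1)) (hθ.comp fun _ _ => Nat.succ_le_succ)
    (fun i j hij => hG (hθ i.zero_le) (hθ j.zero_le) (hθ hij)) hlt hle]
  exact hG (hθ (Nat.zero_le _)) ((hθ (Nat.zero_le _)).trans hlt.le) hlt.le

variable {α : Type*} [MeasurableSpace α]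

lemma setLIntegral_gridStep (μ : Measure α) {w : α → ℝ} (hw : Measurable w) (hθ : Monotone θ) :
    ∫⁻ x in {x | θ 0 < w x}, gridStep θ f (w x) ∂μ =
      f 0 * μ {x | θ 0 < w x} + ∑' k, (f (k + 1) - f k) * μ {x | θ k < w x} := by
  have hmeas : ∀ k, MeasurableSet {x | θ k < w x} := fun k =>
    measurableSet_lt measurable_const hw
  have hind : ∀ k, (fun x => if θ k < w x then f (k + 1) - f k else 0) =
      {x | θ k < w x}.indicator fun _ => f (k + 1) - f k := fun k => rfl
  simp only [gridStep]
  rw [lintegral_add_left measurable_const, lintegral_const, Measure.restrict_apply_univ,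
    lintegral_tsum fun k => ?_]
  · congr 1
    refine tsum_congr fun k => ?_
    have hsub : {x | θ k < w x} ⊆ {x | θ 0 < w x} := fun x hx =>
      (hθ (Nat.zero_le k)).trans_lt hx
    rw [hind, lintegral_indicator_const (hmeas k), Measure.restrict_apply (hmeas k),
      inter_eq_left.mpr hsub]
  · exact (measurable_const.indicator (hmeas k)).aemeasurable

lemma setLIntegral_gridStep_le {β : Type*} [MeasurableSpace β] {μ : Measure α} {ν : Measure β}
    {w : α → ℝ} {w' : β → ℝ} (hw : Measurable w) (hw' : Measurable w') {θ' : ℕ → ℝ}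
    (hθ : Monotone θ) (hθ' : Monotone θ') {c : ℝ≥0∞}
    (h : ∀ k, μ {x | θ k < w x} ≤ c * ν {y | θ' k < w' y}) :
    ∫⁻ x in {x | θ 0 < w x}, gridStep θ f (w x) ∂μ ≤
      c * ∫⁻ y in {y | θ' 0 < w' y}, gridStep θ' f (w' y) ∂ν := by
  rw [setLIntegral_gridStep μ hw hθ, setLIntegral_gridStep ν hw' hθ', mul_add,
    ← ENNReal.tsum_mul_left]
  simp_rw [mul_left_comm c]
  gcongr with k
  · exact h 0
  · exact h k

end GridStep

lemma withDensity_rpow_Ioi {p a : ℝ} (hp : 0 < p) (ha : 0 < a) :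
    volume.withDensity (fun t : ℝ => ENNReal.ofReal (p * t ^ (-1 - p))) (Ioi a) =
      ENNReal.ofReal (a ^ (-p)) := by
  have hexp : -1 - p < -1 := by linarith
  rw [withDensity_apply _ measurableSet_Ioi, ← ofReal_integral_eq_lintegral_ofReal
    ((integrableOn_Ioi_rpow_of_lt hexp ha).const_mul p)
    ((ae_restrict_iff' measurableSet_Ioi).mpr (.of_forall fun t (ht : a < t) =>
      mul_nonneg hp.le (Real.rpow_nonneg (ha.trans ht).le _))),
    integral_const_mul, integral_Ioi_rpow_of_lt hexp ha]
  congr 1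
  rw [show -1 - p + 1 = -p by ring]
  field_simp

lemma withDensity_rpow_Ioi_mul {p a r : ℝ} (hp : 0 < p) (ha : 0 < a) (hr : 0 < r) :
    ENNReal.ofReal (a ^ (-p)) = ENNReal.ofReal (r ^ p) *
      volume.withDensity (fun t : ℝ => ENNReal.ofReal (p * t ^ (-1 - p))) (Ioi (r * a)) := by
  rw [withDensity_rpow_Ioi hp (mul_pos hr ha), ← ENNReal.ofReal_mul (Real.rpow_nonneg hr.le _),
    Real.mul_rpow hr.le ha.le, ← mul_assoc, ← Real.rpow_add hr, add_neg_cancel, Real.rpow_zero,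
    one_mul]

theorem setLIntegral_le_of_meas_lt_le {α : Type*} [MeasurableSpace α] {μ : Measure α}
    {w : α → ℝ} (hw : Measurable w) {G : ℝ → ℝ≥0∞} {s₀ p r : ℝ} {C : ℝ≥0∞}
    (hG : MonotoneOn G (Ici s₀)) (hs₀ : 0 < s₀) (hp : 0 < p) (hr : 1 < r)
    (htail : ∀ t, s₀ ≤ t → μ {x | t < w x} ≤ C * ENNReal.ofReal (t ^ (-p))) :
    ∫⁻ x in {x | s₀ < w x}, G (w x) ∂μ ≤
      C * ENNReal.ofReal (r ^ p) * ∫⁻ t in Ioi s₀, G t * ENNReal.ofReal (p * t ^ (-1 - p)) := by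
  set θ : ℕ → ℝ := fun k => s₀ * r ^ k
  set ν := volume.withDensity fun t : ℝ => ENNReal.ofReal (p * t ^ (-1 - p))
  have hθ : Monotone θ := fun i j hij =>
    mul_le_mul_of_nonneg_left (pow_le_pow_right₀ hr.le hij) hs₀.le
  have hθ0 : θ 0 = s₀ := by simp [θ]
  have hs₀θ : ∀ k, s₀ ≤ θ k := fun k => hθ0 ▸ hθ (Nat.zero_le k)
  have hθ_unbdd : ∀ t, ∃ n, t ≤ θ n := fun t => by
    obtain ⟨n, hn⟩ := pow_unbounded_of_one_lt (t / s₀) hr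
    exact ⟨n, ((div_lt_iff₀' hs₀).mp hn).le⟩
  have htail_shift : ∀ k, μ {x | θ k < w x} ≤ C * ENNReal.ofReal (r ^ p) * ν {t | θ (k + 1) < t} :=
    fun k => by
      have hθ_succ : θ (k + 1) = r * θ k := by simp only [θ]; ring
      calc μ {x | θ k < w x} ≤ C * ENNReal.ofReal (θ k ^ (-p)) := htail _ (hs₀θ k)
        _ = _ := by
          rw [withDensity_rpow_Ioi_mul hp (hs₀.trans_le (hs₀θ k)) (one_pos.trans hr), mul_assoc,
            hθ_succ]
          rfl
  calc ∫⁻ x in {x | s₀ < w x}, G (w x) ∂μ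
      ≤ ∫⁻ x in {x | θ 0 < w x}, gridStep θ (fun k => G (θ k)) (w x) ∂μ := by
        rw [hθ0]
        exact setLIntegral_mono' (measurableSet_lt measurable_const hw) fun x hx =>
          le_gridStep hθ hθ_unbdd (hθ0 ▸ hG) (hθ0 ▸ hx)
    _ ≤ C * ENNReal.ofReal (r ^ p) *
          ∫⁻ t in {t | θ 1 < t}, gridStep (fun k => θ (k + 1)) (fun k => G (θ k)) t ∂ν :=
        setLIntegral_gridStep_le hw measurable_id hθ (hθ.comp fun _ _ => Nat.succ_le_succ)
          htail_shift
    _ ≤ C * ENNReal.ofReal (r ^ p) * ∫⁻ t in Ioi s₀, G t ∂ν := by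
        refine mul_le_mul_right ?_ _
        calc ∫⁻ t in {t | θ 1 < t}, gridStep (fun k => θ (k + 1)) (fun k => G (θ k)) t ∂ν
            ≤ ∫⁻ t in Ioi (θ 1), G t ∂ν := setLIntegral_mono' measurableSet_Ioi fun t ht =>
              gridStep_succ_le hθ hθ_unbdd (hθ0 ▸ hG) ht
          _ ≤ ∫⁻ t in Ioi s₀, G t ∂ν := lintegral_mono_set (Ioi_subset_Ioi (hs₀θ 1))
    _ = C * ENNReal.ofReal (r ^ p) * ∫⁻ t in Ioi s₀, G t * ENNReal.ofReal (p * t ^ (-1 - p)) := by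
        rw [restrict_withDensity measurableSet_Ioi,
          lintegral_withDensity_eq_lintegral_mul_non_measurable _ (by fun_prop)
            (.of_forall fun _ => ENNReal.ofReal_lt_top)]
        exact congrArg _ (lintegral_congr fun t => mul_comm _ _)

section Profile

variable {g : ℝ → ℝ → ℝ}

lemma monotoneOn_apply_rpow (hg₁ : ∀ t, 0 ≤ t → Monotone fun s => g s t)
    (hg₂ : ∀ s, MonotoneOn (fun t => g s t) (Ici 0)) {c : ℝ} (hc : 0 ≤ c) :
    MonotoneOn (fun s => g s (s ^ c)) (Ici 0) := fun x hx y hy hxy =>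
  calc g x (x ^ c) ≤ g y (x ^ c) := hg₁ _ (Real.rpow_nonneg hx _) hxy
    _ ≤ g y (y ^ c) := hg₂ y (Real.rpow_nonneg hx _) (Real.rpow_nonneg hy _)
        (Real.rpow_le_rpow hx hxy hc)

lemma apply_le_apply_max_rpow_inv (hg₁ : ∀ t, 0 ≤ t → Monotone fun s => g s t)
    (hg₂ : ∀ s, MonotoneOn (fun t => g s t) (Ici 0)) {a b c : ℝ} (hb : 0 ≤ b) (hc : 0 < c) :
    g a b ≤ g (max |a| (b ^ c⁻¹)) (max |a| (b ^ c⁻¹) ^ c) := by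
  set m := max |a| (b ^ c⁻¹)
  have hm : 0 ≤ m := (abs_nonneg a).trans (le_max_left _ _)
  have hbm : b ≤ m ^ c := by
    calc b = (b ^ c⁻¹) ^ c := (Real.rpow_inv_rpow hb hc.ne').symm
      _ ≤ m ^ c := Real.rpow_le_rpow (Real.rpow_nonneg hb _) (le_max_right _ _) hc.le
  calc g a b ≤ g m b := hg₁ b hb ((le_abs_self a).trans (le_max_left _ _))
    _ ≤ g m (m ^ c) := hg₂ m hb (Real.rpow_nonneg hm _) hbm

end Profile

lemma lt_max_abs_rpow_inv_iff {a b c t : ℝ} (hb : 0 ≤ b) (ht : 0 ≤ t) (hc : 0 < c) :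
    t < max |a| (b ^ c⁻¹) ↔ t < |a| ∨ t ^ c < |b| := by
  rw [lt_max_iff, Real.lt_rpow_inv_iff_of_pos ht hb hc, abs_of_nonneg hb]

lemma setLIntegral_lt_max_abs_rpow_inv_le {α : Type*} [MeasurableSpace α] {μ : Measure α}
    {Ω : Set α} {u v : α → ℝ} (hv : ∀ x ∈ Ω, 0 ≤ v x) (ρ : α → ℝ≥0∞) {c t : ℝ}
    (ht : 0 ≤ t) (hc : 0 < c) :
    ∫⁻ x in {x ∈ Ω | t < max |u x| (v x ^ c⁻¹)}, ρ x ∂μ ≤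
      (∫⁻ x in {x ∈ Ω | t < |u x|}, ρ x ∂μ) + ∫⁻ x in {x ∈ Ω | t ^ c < |v x|}, ρ x ∂μ := by
  refine (lintegral_mono_set fun x hx => ?_).trans (lintegral_union_le _ _ _)
  obtain ⟨hxΩ, hx⟩ := hx
  rcases (lt_max_abs_rpow_inv_iff (hv x hxΩ) ht hc).mp hx with h | h
  exacts [Or.inl ⟨hxΩ, h⟩, Or.inr ⟨hxΩ, h⟩]

lemma integrableOn_Ioi_rpow_mul_of_monotoneOn {G : ℝ → ℝ} {a s₀ : ℝ} (hs₀ : 0 < s₀)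
    (hG : MonotoneOn G (Ici 0)) (h₁ : IntegrableOn (fun s => s ^ a * G s) (Ioi 1)) :
    IntegrableOn (fun s => s ^ a * G s) (Ioi s₀) := by
  have hcont : ContinuousOn (fun s : ℝ => s ^ a) (Icc s₀ 1) := fun s hs =>
    (Real.continuousAt_rpow_const _ _ (Or.inl (hs₀.trans_le hs.1).ne')).continuousWithinAt
  have hIcc : IntegrableOn (fun s => s ^ a * G s) (Icc s₀ 1) :=
    (hG.mono fun s hs => hs₀.le.trans hs.1).integrableOn_isCompact isCompact_Icc
      |>.continuousOn_mul hcont isCompact_Icc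
  refine (hIcc.union h₁).mono_set fun s (hs : s₀ < s) => ?_
  rcases le_or_gt s 1 with h | h
  exacts [Or.inl ⟨hs.le, h⟩, Or.inr h]

section WeightedTails

variable {α : Type*} [MeasurableSpace α] {μ : Measure α} {Ω : Set α} {u v : α → ℝ}

lemma withDensity_lt_max_abs_rpow_inv_le (hu : Measurable u) (hv : Measurable v)
    (hvnn : ∀ x ∈ Ω, 0 ≤ v x) (ρ : α → ℝ≥0∞) {p q Cu Cv t : ℝ} (hp : 0 < p) (hq : 0 < q)
    (hCu : 0 ≤ Cu) (hCv : 0 ≤ Cv)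
    (heu : ∀ s, 0 < s → ∫⁻ x in {x ∈ Ω | s < |u x|}, ρ x ∂μ ≤ ENNReal.ofReal (Cu * s ^ (-p)))
    (hev : ∀ s, 0 < s → ∫⁻ x in {x ∈ Ω | s < |v x|}, ρ x ∂μ ≤ ENNReal.ofReal (Cv * s ^ (-q)))
    (ht : 0 < t) :
    (μ.restrict Ω).withDensity ρ {x | t < max |u x| (v x ^ (p / q)⁻¹)} ≤
      ENNReal.ofReal (Cu + Cv) * ENNReal.ofReal (t ^ (-p)) := by
  have hmeas : MeasurableSet {x | t < max |u x| (v x ^ (p / q)⁻¹)} :=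
    measurableSet_lt measurable_const (hu.abs.max (hv.pow_const _))
  rw [withDensity_apply _ hmeas, Measure.restrict_restrict hmeas, inter_comm]
  calc _ ≤ _ := setLIntegral_lt_max_abs_rpow_inv_le hvnn ρ ht.le (div_pos hp hq)
    _ ≤ ENNReal.ofReal (Cu * t ^ (-p)) + ENNReal.ofReal (Cv * (t ^ (p / q)) ^ (-q)) :=
      add_le_add (heu t ht) (hev _ (Real.rpow_pos_of_pos ht _))
    _ = _ := by
      rw [← Real.rpow_mul ht.le, show p / q * -q = -p by field_simp,
        ← ENNReal.ofReal_add (by positivity) (by positivity),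
        ← ENNReal.ofReal_mul (by positivity), add_mul]

lemma setLIntegral_diff_le_setLIntegral_max (hΩ : MeasurableSet Ω) (hu : Measurable u)
    (hv : Measurable v) (hvnn : ∀ x ∈ Ω, 0 ≤ v x) {φ : α → ℝ} (hφm : Measurable φ)
    (hφ : ∀ x ∈ Ω, 0 ≤ φ x) {g : ℝ → ℝ → ℝ} (hg₁ : ∀ t, 0 ≤ t → Monotone fun s => g s t)
    (hg₂ : ∀ s, MonotoneOn (fun t => g s t) (Ici 0)) {c s₀ : ℝ} (hc : 0 < c) (hs₀ : 0 ≤ s₀) :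
    ∫⁻ x in Ω \ {x ∈ Ω | |u x| ≤ s₀ ∧ |v x| ≤ s₀ ^ c},
        ENNReal.ofReal (g (u x) (v x) * φ x) ∂μ ≤
      ∫⁻ x in {x | s₀ < max |u x| (v x ^ c⁻¹)},
        ENNReal.ofReal (g (max |u x| (v x ^ c⁻¹)) (max |u x| (v x ^ c⁻¹) ^ c))
          ∂(μ.restrict Ω).withDensity fun x => ENNReal.ofReal (φ x) := by
  have hmeas : MeasurableSet {x | s₀ < max |u x| (v x ^ c⁻¹)} :=
    measurableSet_lt measurable_const (hu.abs.max (hv.pow_const _))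
  rw [restrict_withDensity hmeas, Measure.restrict_restrict hmeas,
    lintegral_withDensity_eq_lintegral_mul_non_measurable _ (by fun_prop)
      (.of_forall fun _ => ENNReal.ofReal_lt_top)]
  refine (lintegral_mono_set fun x hx => ?_).trans
    (setLIntegral_mono' (hmeas.inter hΩ) fun x hx => ?_)
  · obtain ⟨hxΩ, hxA⟩ := hx
    refine ⟨(lt_max_abs_rpow_inv_iff (hvnn x hxΩ) hs₀ hc).mpr ?_, hxΩ⟩
    by_contra! h
    exact hxA ⟨hxΩ, h⟩
  · have hφx := hφ x hx.2
    rw [Pi.mul_apply, ← ENNReal.ofReal_mul hφx, mul_comm (φ x)]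
    exact ENNReal.ofReal_le_ofReal (mul_le_mul_of_nonneg_right
      (apply_le_apply_max_rpow_inv hg₁ hg₂ (hvnn x hx.2) hc) hφx)

end WeightedTails

lemma setLIntegral_ofReal_mul_rpow {G : ℝ → ℝ} {a p s₀ : ℝ} (hp : 0 ≤ p) (hs₀ : 0 ≤ s₀)
    (hG : ∀ t, s₀ < t → 0 ≤ G t) (hint : IntegrableOn (fun t => t ^ a * G t) (Ioi s₀)) :
    ∫⁻ t in Ioi s₀, ENNReal.ofReal (G t) * ENNReal.ofReal (p * t ^ a) =
      ENNReal.ofReal (p * ∫ t in Ioi s₀, t ^ a * G t) := by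
  rw [← integral_const_mul, ofReal_integral_eq_lintegral_ofReal (hint.const_mul p)
    ((ae_restrict_iff' measurableSet_Ioi).mpr (.of_forall fun t (ht : s₀ < t) =>
      mul_nonneg hp (mul_nonneg (Real.rpow_nonneg (hs₀.trans ht.le) _) (hG t ht))))]
  refine setLIntegral_congr_fun measurableSet_Ioi fun t (ht : s₀ < t) => ?_
  rw [← ENNReal.ofReal_mul (hG t ht)]
  congr 1
  ring

theorem stmt_0_general {N : ℕ} (Ω : Set (EuclideanSpace ℝ (Fin N))) (hΩ : IsOpen Ω)
    (φ : EuclideanSpace ℝ (Fin N) → ℝ) (hφm : Measurable φ) (hφpos : ∀ x ∈ Ω, 0 < φ x)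
    (g : ℝ → ℝ → ℝ)
    (hgnn : ∀ s t : ℝ, 0 ≤ t → 0 ≤ g s t)
    (hgmono1 : ∀ t : ℝ, 0 ≤ t → Monotone fun s => g s t)
    (hgmono2 : ∀ s : ℝ, MonotoneOn (fun t => g s t) (Set.Ici 0))
    (p q : ℝ) (hp : 0 < p) (hq : 0 < q)
    (hgint : IntegrableOn (fun s : ℝ => s ^ (-1 - p) * g s (s ^ (p / q))) (Set.Ioi (1 : ℝ)))
    (u v : EuclideanSpace ℝ (Fin N) → ℝ) (hu : Measurable u) (hv : Measurable v)
    (hvnn : ∀ x ∈ Ω, 0 ≤ v x)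
    (Cu Cv : ℝ) (hCu : 0 < Cu) (hCv : 0 < Cv)
    (heu : ∀ s : ℝ, 0 < s →
      ∫⁻ x in {x ∈ Ω | s < |u x|}, ENNReal.ofReal (φ x) ≤ ENNReal.ofReal (Cu * s ^ (-p)))
    (hev : ∀ s : ℝ, 0 < s →
      ∫⁻ x in {x ∈ Ω | s < |v x|}, ENNReal.ofReal (φ x) ≤ ENNReal.ofReal (Cv * s ^ (-q)))
    (s₀ : ℝ) (hs₀ : 0 < s₀) :
    ∫⁻ x in Ω, ENNReal.ofReal (g (u x) (v x) * φ x) ≤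
      (∫⁻ x in {x ∈ Ω | |u x| ≤ s₀ ∧ |v x| ≤ s₀ ^ (p / q)},
          ENNReal.ofReal (g (u x) (v x) * φ x)) +
      ENNReal.ofReal (2 * p * (Cu + Cv) *
        ∫ s in Set.Ioi s₀, s ^ (-1 - p) * g s (s ^ (p / q))) := by
  set A := {x ∈ Ω | |u x| ≤ s₀ ∧ |v x| ≤ s₀ ^ (p / q)}
  have hpq : 0 < p / q := div_pos hp hq
  have hG : MonotoneOn (fun s => g s (s ^ (p / q))) (Ici 0) :=
    monotoneOn_apply_rpow hgmono1 hgmono2 hpq.le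
  have key := setLIntegral_le_of_meas_lt_le (hu.abs.max (hv.pow_const _))
    (ENNReal.ofReal_mono.comp_monotoneOn (hG.mono (Ici_subset_Ici.mpr hs₀.le))) hs₀ hp
    (Real.one_lt_rpow one_lt_two (inv_pos.mpr hp)) fun t ht =>
      withDensity_lt_max_abs_rpow_inv_le hu hv hvnn _ hp hq hCu.le hCv.le heu hev (hs₀.trans_le ht)
  rw [Real.rpow_inv_rpow zero_le_two hp.ne', Function.comp_def,
    setLIntegral_ofReal_mul_rpow hp.le hs₀.le
      (fun t ht => hgnn _ _ (Real.rpow_nonneg (hs₀.trans ht).le _))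
      (integrableOn_Ioi_rpow_mul_of_monotoneOn hs₀ hG hgint)] at key
  calc ∫⁻ x in Ω, ENNReal.ofReal (g (u x) (v x) * φ x)
      ≤ ∫⁻ x in A ∪ Ω \ A, ENNReal.ofReal (g (u x) (v x) * φ x) :=
        lintegral_mono_set (union_sdiff_cancel fun x hx => hx.1).ge
    _ ≤ (∫⁻ x in A, ENNReal.ofReal (g (u x) (v x) * φ x)) +
          ∫⁻ x in Ω \ A, ENNReal.ofReal (g (u x) (v x) * φ x) := lintegral_union_le _ _ _
    _ ≤ _ := by
        refine add_le_add_right ((setLIntegral_diff_le_setLIntegral_max hΩ.measurableSet hu hv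
          hvnn hφm (fun x hx => (hφpos x hx).le) hgmono1 hgmono2 hpq hs₀.le).trans
          (key.trans_eq ?_)) _
        rw [← ENNReal.ofReal_mul (by positivity), ← ENNReal.ofReal_mul (by positivity)]
        ring_nf

/-- Uniform integrability lemma: if `g` is non-decreasing, locally
Lipschitz in each variable, with `g 0 0 = 0` and a finite tail integral, and the
weighted distribution functions of `u` and `v` decay like `Cᵤ s^{-p}`, `Cᵥ s^{-q}`,
then the weighted integral of `g(u, v)` splits as stated. -/
theorem stmt_0 {N : ℕ} (Ω : Set (EuclideanSpace ℝ (Fin N))) (hΩ : IsOpen Ω)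
    (φ : EuclideanSpace ℝ (Fin N) → ℝ) (hφm : Measurable φ) (hφpos : ∀ x ∈ Ω, 0 < φ x)
    (g : ℝ → ℝ → ℝ)
    (hgnn : ∀ s t : ℝ, 0 ≤ t → 0 ≤ g s t)
    (hgmono1 : ∀ t : ℝ, 0 ≤ t → Monotone fun s => g s t)
    (hgmono2 : ∀ s : ℝ, MonotoneOn (fun t => g s t) (Set.Ici 0))
    (hglip1 : ∀ t : ℝ, 0 ≤ t → ∀ s₀ : ℝ, ∃ K : NNReal, ∃ ε > 0,
      LipschitzOnWith K (fun s => g s t) (Metric.ball s₀ ε))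
    (hglip2 : ∀ s t₀ : ℝ, 0 ≤ t₀ → ∃ K : NNReal, ∃ ε > 0,
      LipschitzOnWith K (fun t => g s t) (Metric.ball t₀ ε ∩ Set.Ici 0))
    (hg00 : g 0 0 = 0)
    (p q : ℝ) (hp : 0 < p) (hq : 0 < q)
    (hgint : IntegrableOn (fun s : ℝ => s ^ (-1 - p) * g s (s ^ (p / q))) (Set.Ioi (1 : ℝ)))
    (u v : EuclideanSpace ℝ (Fin N) → ℝ) (hu : Measurable u) (hv : Measurable v)
    (hvnn : ∀ x ∈ Ω, 0 ≤ v x)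
    (Cu Cv : ℝ) (hCu : 0 < Cu) (hCv : 0 < Cv)
    (heu : ∀ s : ℝ, 0 < s →
      ∫⁻ x in {x ∈ Ω | s < |u x|}, ENNReal.ofReal (φ x) ≤ ENNReal.ofReal (Cu * s ^ (-p)))
    (hev : ∀ s : ℝ, 0 < s →
      ∫⁻ x in {x ∈ Ω | s < |v x|}, ENNReal.ofReal (φ x) ≤ ENNReal.ofReal (Cv * s ^ (-q)))
    (s₀ : ℝ) (hs₀ : 0 < s₀) :
    ∫⁻ x in Ω, ENNReal.ofReal (g (u x) (v x) * φ x) ≤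
      (∫⁻ x in {x ∈ Ω | |u x| ≤ s₀ ∧ |v x| ≤ s₀ ^ (p / q)},
          ENNReal.ofReal (g (u x) (v x) * φ x)) +
      ENNReal.ofReal (2 * p * (Cu + Cv) *
        ∫ s in Set.Ioi s₀, s ^ (-1 - p) * g s (s ^ (p / q))) :=
  stmt_0_general Ω hΩ φ hφm hφpos g hgnn hgmono1 hgmono2 p q hp hq hgint u v hu hv hvnn Cu Cv hCu
    hCv heu hev s₀ hs₀
end

section
/- Let ω be a nonnegative finite Borel measure on ∂Ω, let η ∈ C(Ω) be a positive weight function, and let ℋ be a continuous nonnegative function on Ω × ∂Ω. Suppose there exist C > 0 and τ > 1 such that for every y ∈ ∂Ω and every λ > 0 one has ∫_{{x ∈ Ω : ℋ(x,y) > λ}} η(x) dx ≤ C λ^{−τ}. Then the function ℍ[ω](x) := ∫_{∂Ω} ℋ(x,y) dω(y) satisfies: for every measurable set A ⊆ Ω with 0 < ∫_A η dx < ∞, ∫_A ℍ[ω] η dx ≤ (1 + Cτ/(τ−1)) ω(∂Ω) ( ∫_A η dx )^{(τ−1)/τ}. -/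
open MeasureTheory Set

/-! By Tonelli it suffices to bound `∫_A ℋ(x, y) η(x) dx` for a fixed boundary point `y`.
For the finite measure `η dx` on `A`, of mass `m`, the superlevel sets of `ℋ(·, y)` have measure
at most `min(m, C λ^{-τ})`; splitting the layer cake integral at height `l` gives the bound
`m l + C l^{1-τ}/(τ-1)`, and the choice `l = m^{-1/τ}` makes it `(1 + C/(τ-1)) m^{(τ-1)/τ}`. -/

theorem ContinuousOn.aemeasurable_of_ae_mem {α β : Type*} [TopologicalSpace α]
    [MeasurableSpace α] [OpensMeasurableSpace α] [TopologicalSpace β] [MeasurableSpace β]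
    [BorelSpace β] {f : α → β} {s : Set α} {μ : Measure α} (hf : ContinuousOn f s)
    (hs : MeasurableSet s) (hμs : ∀ᵐ x ∂μ, x ∈ s) : AEMeasurable f μ := by
  simpa only [Measure.restrict_eq_self_of_ae_mem hμs] using hf.aemeasurable (μ := μ) hs

section WeakType

variable {α : Type*} [MeasurableSpace α] {ν : Measure α} {f : α → ℝ} {C τ : ℝ}

theorem lintegral_Ioi_ofReal_mul_rpow_neg {l : ℝ} (hl : 0 < l) (hC : 0 ≤ C) (hτ : 1 < τ) :
    ∫⁻ t in Ioi l, ENNReal.ofReal (C * t ^ (-τ)) = ENNReal.ofReal (C * l ^ (1 - τ) / (τ - 1)) := by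
  have hint : IntegrableOn (fun t : ℝ => C * t ^ (-τ)) (Ioi l) :=
    (integrableOn_Ioi_rpow_of_lt (by linarith) hl).const_mul C
  have hnn : 0 ≤ᵐ[volume.restrict (Ioi l)] fun t : ℝ => C * t ^ (-τ) := by
    filter_upwards [ae_restrict_mem measurableSet_Ioi] with t ht
    exact mul_nonneg hC (Real.rpow_nonneg (hl.trans ht).le _)
  rw [← ofReal_integral_eq_lintegral_ofReal hint hnn, integral_const_mul,
    integral_Ioi_rpow_of_lt (by linarith) hl, neg_add_eq_sub]
  have : 1 - τ ≠ 0 := by linarith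
  have : τ - 1 ≠ 0 := by linarith
  congr 1
  field_simp
  ring

theorem lintegral_ofReal_le_mul_add_of_meas_lt_le_rpow (hf : AEMeasurable f ν)
    (hf_nn : 0 ≤ᵐ[ν] f) (hC : 0 ≤ C) (hτ : 1 < τ)
    (htail : ∀ t : ℝ, 0 < t → ν {x | t < f x} ≤ ENNReal.ofReal (C * t ^ (-τ)))
    {l : ℝ} (hl : 0 < l) :
    ∫⁻ x, ENNReal.ofReal (f x) ∂ν ≤
      ν univ * ENNReal.ofReal l + ENNReal.ofReal (C * l ^ (1 - τ) / (τ - 1)) := by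
  rw [lintegral_eq_lintegral_meas_lt ν hf_nn hf, ← Ioc_union_Ioi_eq_Ioi hl.le,
    lintegral_union measurableSet_Ioi (Ioc_disjoint_Ioi le_rfl)]
  gcongr
  · calc ∫⁻ t in Ioc 0 l, ν {x | t < f x} ≤ ∫⁻ _ in Ioc 0 l, ν univ :=
          lintegral_mono fun t => measure_mono (subset_univ _)
      _ = ν univ * ENNReal.ofReal l := by rw [setLIntegral_const, Real.volume_Ioc, sub_zero]
  · calc ∫⁻ t in Ioi l, ν {x | t < f x} ≤ ∫⁻ t in Ioi l, ENNReal.ofReal (C * t ^ (-τ)) :=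
          setLIntegral_mono' measurableSet_Ioi fun t ht => htail t (hl.trans ht)
      _ = _ := lintegral_Ioi_ofReal_mul_rpow_neg hl hC hτ

theorem lintegral_ofReal_le_of_meas_lt_le_rpow [IsFiniteMeasure ν] (hf : AEMeasurable f ν)
    (hf_nn : 0 ≤ᵐ[ν] f) (hC : 0 ≤ C) (hτ : 1 < τ)
    (htail : ∀ t : ℝ, 0 < t → ν {x | t < f x} ≤ ENNReal.ofReal (C * t ^ (-τ))) :
    ∫⁻ x, ENNReal.ofReal (f x) ∂ν ≤
      ENNReal.ofReal ((1 + C / (τ - 1)) * (ν univ).toReal ^ ((τ - 1) / τ)) := by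
  rcases eq_zero_or_neZero ν with rfl | _
  · simp
  set m := (ν univ).toReal
  have hm : 0 < m := ENNReal.toReal_pos (NeZero.ne _) (measure_ne_top ν univ)
  have hτ0 : τ ≠ 0 := (zero_lt_one.trans hτ).ne'
  have hml : m * m ^ (-1 / τ) = m ^ ((τ - 1) / τ) := by
    rw [show (τ - 1) / τ = 1 + -1 / τ by field_simp; ring, Real.rpow_add hm, Real.rpow_one]
  have hlτ : (m ^ (-1 / τ)) ^ (1 - τ) = m ^ ((τ - 1) / τ) := by
    rw [← Real.rpow_mul hm.le]
    congr 1
    field_simp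
    ring
  refine (lintegral_ofReal_le_mul_add_of_meas_lt_le_rpow hf hf_nn hC hτ htail
    (Real.rpow_pos_of_pos hm (-1 / τ))).trans_eq ?_
  rw [← ENNReal.ofReal_toReal (measure_ne_top ν univ), ← ENNReal.ofReal_mul hm.le,
    ← ENNReal.ofReal_add (by positivity) (by have := sub_pos.2 hτ; positivity), hml, hlτ]
  congr 1
  ring

theorem lintegral_withDensity_ofReal_le_of_superlevel_le {μ : Measure α} [SFinite μ] {A : Set α}
    (hA : MeasurableSet A) {g : α → ENNReal} (hgA : ∫⁻ x in A, g x ∂μ ≠ ⊤) {h : α → ℝ}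
    (hh : AEMeasurable h (μ.restrict A)) (hh_nn : ∀ x ∈ A, 0 ≤ h x) (hC : 0 ≤ C) (hτ : 1 < τ)
    (hbound : ∀ l : ℝ, 0 < l → ∫⁻ x in {x ∈ A | l < h x}, g x ∂μ ≤ ENNReal.ofReal (C * l ^ (-τ))) :
    ∫⁻ x, ENNReal.ofReal (h x) ∂(μ.restrict A).withDensity g ≤
      ENNReal.ofReal ((1 + C / (τ - 1)) * (∫⁻ x in A, g x ∂μ).toReal ^ ((τ - 1) / τ)) := by
  have hν_ac := withDensity_absolutelyContinuous (μ.restrict A) g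
  have hνuniv : (μ.restrict A).withDensity g univ = ∫⁻ x in A, g x ∂μ := by
    rw [withDensity_apply _ MeasurableSet.univ, Measure.restrict_univ]
  have : IsFiniteMeasure ((μ.restrict A).withDensity g) := ⟨hνuniv ▸ hgA.lt_top⟩
  rw [← hνuniv]
  refine lintegral_ofReal_le_of_meas_lt_le_rpow (hh.mono_ac hν_ac)
    (hν_ac ((ae_restrict_mem hA).mono hh_nn)) hC hτ fun t ht => ?_
  calc (μ.restrict A).withDensity g {x | t < h x} = ∫⁻ x in {x | t < h x} ∩ A, g x ∂μ := by
        rw [withDensity_apply', Measure.restrict_restrict' hA]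
    _ ≤ _ := (hbound t ht).trans' (lintegral_mono_set fun x hx => ⟨hx.2, hx.1⟩)

end WeakType

theorem stmt_1_general {N : ℕ} (Ω : Set (EuclideanSpace ℝ (Fin N)))
    (hΩo : IsOpen Ω)
    (ω : Measure (EuclideanSpace ℝ (Fin N))) [IsFiniteMeasure ω]
    (hωsupp : ω (frontier Ω)ᶜ = 0)
    (η : EuclideanSpace ℝ (Fin N) → ℝ) (hηc : ContinuousOn η Ω)
    (H : EuclideanSpace ℝ (Fin N) → EuclideanSpace ℝ (Fin N) → ℝ)
    (hHc : ContinuousOn (fun z : EuclideanSpace ℝ (Fin N) × EuclideanSpace ℝ (Fin N) =>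
      H z.1 z.2) (Ω ×ˢ frontier Ω))
    (hHnn : ∀ x ∈ Ω, ∀ y ∈ frontier Ω, 0 ≤ H x y)
    (C τ : ℝ) (hC : 0 < C) (hτ : 1 < τ)
    (hbound : ∀ y ∈ frontier Ω, ∀ l : ℝ, 0 < l →
      ∫⁻ x in {x ∈ Ω | l < H x y}, ENNReal.ofReal (η x) ≤ ENNReal.ofReal (C * l ^ (-τ))) :
    ∀ A : Set (EuclideanSpace ℝ (Fin N)), MeasurableSet A → A ⊆ Ω →
      0 < ∫⁻ x in A, ENNReal.ofReal (η x) → (∫⁻ x in A, ENNReal.ofReal (η x)) < ⊤ →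
      ∫⁻ x in A, (∫⁻ y, ENNReal.ofReal (H x y) ∂ω) * ENNReal.ofReal (η x) ≤
        ENNReal.ofReal ((1 + C * τ / (τ - 1)) * (ω (frontier Ω)).toReal *
          (∫⁻ x in A, ENNReal.ofReal (η x)).toReal ^ ((τ - 1) / τ)) := by
  intro A hA hAΩ _ hfin
  set ν := (volume.restrict A).withDensity fun x => ENNReal.ofReal (η x)
  set K := (1 + C / (τ - 1)) * (∫⁻ x in A, ENNReal.ofReal (η x)).toReal ^ ((τ - 1) / τ)
  have hAΩ_ae : ∀ᵐ x ∂volume.restrict A, x ∈ Ω := (ae_restrict_mem hA).mono hAΩ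
  have hωΩ : ∀ᵐ y ∂ω, y ∈ frontier Ω := hωsupp
  have hinner (y) (hy : y ∈ frontier Ω) : ∫⁻ x, ENNReal.ofReal (H x y) ∂ν ≤ ENNReal.ofReal K :=
    lintegral_withDensity_ofReal_le_of_superlevel_le hA hfin.ne
      ((hHc.comp (Continuous.prodMk_left y).continuousOn fun x hx => ⟨hx, hy⟩)
        |>.aemeasurable_of_ae_mem hΩo.measurableSet hAΩ_ae)
      (fun x hx => hHnn x (hAΩ hx) y hy) hC.le hτ fun l hl =>
      (hbound y hy l hl).trans' (lintegral_mono_set fun x hx => ⟨hAΩ hx.1, hx.2⟩)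
  have hHmeas : AEMeasurable (Function.uncurry fun x y => ENNReal.ofReal (H x y)) (ν.prod ω) :=
    ENNReal.measurable_ofReal.comp_aemeasurable <| hHc.aemeasurable_of_ae_mem
      (hΩo.measurableSet.prod isClosed_frontier.measurableSet)
      ((Measure.quasiMeasurePreserving_fst.ae (withDensity_absolutelyContinuous _ _ hAΩ_ae)).and
        (Measure.quasiMeasurePreserving_snd.ae hωΩ))
  calc ∫⁻ x in A, (∫⁻ y, ENNReal.ofReal (H x y) ∂ω) * ENNReal.ofReal (η x)
      = ∫⁻ x, ∫⁻ y, ENNReal.ofReal (H x y) ∂ω ∂ν := by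
        rw [lintegral_withDensity_eq_lintegral_mul_non_measurable₀ _
          (hηc.aemeasurable_of_ae_mem hΩo.measurableSet hAΩ_ae).ennreal_ofReal
          (.of_forall fun _ => ENNReal.ofReal_lt_top)]
        simp only [Pi.mul_apply, mul_comm]
    _ = ∫⁻ y, ∫⁻ x, ENNReal.ofReal (H x y) ∂ν ∂ω := lintegral_lintegral_swap hHmeas
    _ ≤ ∫⁻ _, ENNReal.ofReal K ∂ω := lintegral_mono_ae (hωΩ.mono hinner)
    _ = ENNReal.ofReal (K * (ω (frontier Ω)).toReal) := by
        rw [ENNReal.ofReal_mul' ENNReal.toReal_nonneg, ENNReal.ofReal_toReal (measure_ne_top _ _),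
          lintegral_const, measure_congr (ae_eq_univ.2 hωsupp)]
    _ ≤ _ := by
        gcongr ENNReal.ofReal ?_
        rw [mul_right_comm]
        gcongr
        exact le_mul_of_one_le_right hC.le hτ.le

/-- Weak-type estimate for a kernel operator against a finite boundary
measure (Bidaut-Véron–Vivier type lemma). -/
theorem stmt_1 {N : ℕ} (Ω : Set (EuclideanSpace ℝ (Fin N)))
    (hΩo : IsOpen Ω) (hΩb : Bornology.IsBounded Ω)
    (ω : Measure (EuclideanSpace ℝ (Fin N))) [IsFiniteMeasure ω]
    (hωsupp : ω (frontier Ω)ᶜ = 0)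
    (η : EuclideanSpace ℝ (Fin N) → ℝ) (hηc : ContinuousOn η Ω) (hηpos : ∀ x ∈ Ω, 0 < η x)
    (H : EuclideanSpace ℝ (Fin N) → EuclideanSpace ℝ (Fin N) → ℝ)
    (hHc : ContinuousOn (fun z : EuclideanSpace ℝ (Fin N) × EuclideanSpace ℝ (Fin N) =>
      H z.1 z.2) (Ω ×ˢ frontier Ω))
    (hHnn : ∀ x ∈ Ω, ∀ y ∈ frontier Ω, 0 ≤ H x y)
    (C τ : ℝ) (hC : 0 < C) (hτ : 1 < τ)
    (hbound : ∀ y ∈ frontier Ω, ∀ l : ℝ, 0 < l →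
      ∫⁻ x in {x ∈ Ω | l < H x y}, ENNReal.ofReal (η x) ≤ ENNReal.ofReal (C * l ^ (-τ))) :
    ∀ A : Set (EuclideanSpace ℝ (Fin N)), MeasurableSet A → A ⊆ Ω →
      0 < ∫⁻ x in A, ENNReal.ofReal (η x) → (∫⁻ x in A, ENNReal.ofReal (η x)) < ⊤ →
      ∫⁻ x in A, (∫⁻ y, ENNReal.ofReal (H x y) ∂ω) * ENNReal.ofReal (η x) ≤
        ENNReal.ofReal ((1 + C * τ / (τ - 1)) * (ω (frontier Ω)).toReal *
          (∫⁻ x in A, ENNReal.ofReal (η x)).toReal ^ ((τ - 1) / τ)) :=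
  stmt_1_general Ω hΩo ω hωsupp η hηc H hHc hHnn C τ hC hτ hbound
end

section
/- Let γ ∈ [0,1] and α ≥ 0, and define for x, y ∈ Ω with x ≠ y the kernel F₁(x,y) := |x−y|^{2−N} · min{ 1/d(y), d(x)/|x−y|² } · min{ d(x), |x−y| }^{−γ} · d_Σ(x)^{α}. Then there exists a constant C > 0, depending only on N, α, γ and diam(Ω), such that for every y ∈ Ω and every λ > 0, ∫_{{x ∈ Ω \ {y} : F₁(x,y) > λ}} d(x) d_Σ(x)^{−α} dx ≤ C λ^{−(N+1)/(N+γ−1)}. -/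
/-!
Write `r = |x - y|`. Since `d(y) ≥ d(x) - r`, a case split on `d(x) ≤ r` shows that for
`t ∈ [0, 1]` the factor `K = r^{2-N} min{1/d(y), d(x)/r²} min{d(x), r}^{-γ}` of `F₁` satisfies
`d(x)^t K ≤ 4 r^{t+1-N-γ}`. With `t = 0` and `d_Σ ≤ D` for some `D ≥ diam Ω`, the level set
`{F₁ > λ}` lies in the ball of radius `ρ = (4 D^α / λ)^{1/(N+γ-1)}` about `y`; with `t = 1`, on
the level set `d(x) d_Σ(x)^{-α} < d(x) K / λ ≤ 4 r^{2-N-γ} / λ`. Integrating in polar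
coordinates, `∫_{B(y,ρ)} r^{2-N-γ} = N |B₁| ρ^{2-γ} / (2-γ)`, and `λ^{-1} ρ^{2-γ}` is the
claimed power of `λ`.
-/

open MeasureTheory Set Metric Module

theorem min_inv_div_sq_le {a b r : ℝ} (hr : 0 < r) (hra : r < a) (hab : a - r ≤ b) :
    min b⁻¹ (a / r ^ 2) ≤ 4 / a := by
  have ha : 0 < a := hr.trans hra
  by_cases ha2 : a ≤ 2 * r
  · refine (min_le_right _ _).trans ?_
    rw [div_le_div_iff₀ (by positivity) ha]
    nlinarith
  · refine (min_le_left _ _).trans ?_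
    rw [inv_le_comm₀ (by linarith) (by positivity), inv_div]
    linarith

theorem rpow_mul_kernel_le {n γ t a b r : ℝ} (hγ : γ ≤ 1) (ht0 : 0 ≤ t) (ht1 : t ≤ 1)
    (hr : 0 < r) (ha : 0 < a) (hab : a - r ≤ b) :
    a ^ t * (r ^ (2 - n) * min b⁻¹ (a / r ^ (2 : ℝ)) * min a r ^ (-γ)) ≤
      4 * r ^ (t + 1 - n - γ) := by
  rw [Real.rpow_two]
  rcases le_or_gt a r with har | hra
  · calc a ^ t * (r ^ (2 - n) * min b⁻¹ (a / r ^ 2) * min a r ^ (-γ))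
        ≤ a ^ t * (r ^ (2 - n) * (a / r ^ 2) * a ^ (-γ)) := by
          rw [min_eq_left har]; gcongr; exact min_le_right _ _
      _ = a ^ (t + 1 - γ) * r ^ (-n) := by
          rw [Real.rpow_sub ha, Real.rpow_add ha, Real.rpow_neg ha.le, Real.rpow_one,
            Real.rpow_sub hr, Real.rpow_neg hr.le, Real.rpow_two]
          field_simp
      _ ≤ r ^ (t + 1 - γ) * r ^ (-n) := by gcongr; linarith
      _ = r ^ (t + 1 - n - γ) := by rw [← Real.rpow_add hr]; ring_nf
      _ ≤ 4 * r ^ (t + 1 - n - γ) := by linarith [Real.rpow_pos_of_pos hr (t + 1 - n - γ)]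
  · calc a ^ t * (r ^ (2 - n) * min b⁻¹ (a / r ^ 2) * min a r ^ (-γ))
        ≤ a ^ t * (r ^ (2 - n) * (4 / a) * r ^ (-γ)) := by
          rw [min_eq_right hra.le]; gcongr; exact min_inv_div_sq_le hr hra hab
      _ = 4 * a ^ (t - 1) * r ^ (2 - n - γ) := by
          rw [Real.rpow_sub ha, Real.rpow_one, sub_eq_add_neg _ γ, Real.rpow_add hr]
          field_simp
      _ ≤ 4 * r ^ (t - 1) * r ^ (2 - n - γ) := by
          gcongr 4 * ?_ * _
          exact Real.rpow_le_rpow_of_nonpos hr hra.le (by linarith)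
      _ = 4 * r ^ (t + 1 - n - γ) := by rw [mul_assoc, ← Real.rpow_add hr]; ring_nf

theorem rpow_neg_le_div_of_lt_mul_rpow {K s α l : ℝ} (hl : 0 < l) (hs : 0 ≤ s)
    (h : l < K * s ^ α) : s ^ (-α) ≤ K / l := by
  have hKs := hl.trans h
  have hsα : 0 < s ^ α :=
    pos_of_mul_pos_right hKs (pos_of_mul_pos_left hKs (Real.rpow_nonneg hs α)).le
  rw [Real.rpow_neg hs, le_div_iff₀ hl, inv_mul_le_iff₀ hsα]
  linarith

theorem lt_rpow_inv_of_lt_mul_rpow_neg {M l r p : ℝ} (hl : 0 < l) (hr : 0 < r) (hp : 0 < p)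
    (h : l < M * r ^ (-p)) : r < (M / l) ^ p⁻¹ := by
  have hrp : r ^ p < M / l := by
    rw [Real.rpow_neg hr.le, ← div_eq_mul_inv] at h
    rw [lt_div_iff₀ hl]
    rwa [lt_div_iff₀ (by positivity), mul_comm] at h
  simpa [Real.rpow_rpow_inv hr.le hp.ne'] using
    Real.rpow_lt_rpow (by positivity) hrp (inv_pos.2 hp)

theorem levelSet_bounds {n γ α l a b r s D : ℝ} (hγ1 : γ ≤ 1) (hp : 0 < n + γ - 1)
    (hα : 0 ≤ α) (hl : 0 < l) (hr : 0 < r) (ha : 0 < a) (hab : a - r ≤ b) (hs : 0 ≤ s)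
    (hsD : s ≤ D)
    (h : l < r ^ (2 - n) * min b⁻¹ (a / r ^ (2 : ℝ)) * min a r ^ (-γ) * s ^ α) :
    r < (4 * D ^ α / l) ^ (n + γ - 1)⁻¹ ∧ a * s ^ (-α) ≤ 4 * l⁻¹ * r ^ (2 - n - γ) := by
  set K := r ^ (2 - n) * min b⁻¹ (a / r ^ (2 : ℝ)) * min a r ^ (-γ)
  have hK0 : K ≤ 4 * r ^ (1 - n - γ) := by
    have := rpow_mul_kernel_le (n := n) hγ1 le_rfl zero_le_one hr ha hab
    rwa [Real.rpow_zero, one_mul, zero_add] at this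
  have hK1 : a * K ≤ 4 * r ^ (2 - n - γ) := by
    have := rpow_mul_kernel_le (n := n) hγ1 zero_le_one le_rfl hr ha hab
    rwa [Real.rpow_one, show (1 : ℝ) + 1 - n - γ = 2 - n - γ by ring] at this
  constructor
  · refine lt_rpow_inv_of_lt_mul_rpow_neg hl hr hp ?_
    calc l < K * s ^ α := h
      _ ≤ 4 * r ^ (1 - n - γ) * D ^ α :=
          mul_le_mul hK0 (Real.rpow_le_rpow hs hsD hα) (by positivity) (by positivity)
      _ = 4 * D ^ α * r ^ (-(n + γ - 1)) := by ring_nf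
  · calc a * s ^ (-α) ≤ a * (K / l) := by
          gcongr; exact rpow_neg_le_div_of_lt_mul_rpow hl hs h
      _ ≤ 4 * r ^ (2 - n - γ) / l := by rw [mul_div_assoc']; gcongr
      _ = 4 * l⁻¹ * r ^ (2 - n - γ) := by ring

theorem inv_mul_rpow_div_rpow_inv {M l p q : ℝ} (hM : 0 ≤ M) (hl : 0 < l) (hp : p ≠ 0) :
    l⁻¹ * ((M / l) ^ p⁻¹) ^ q = M ^ (q / p) * l ^ (-((p + q) / p)) := by
  rw [← Real.rpow_mul (div_nonneg hM hl.le), Real.div_rpow hM hl.le, inv_mul_eq_div,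
    show -((p + q) / p) = -1 + -(p⁻¹ * q) by field_simp; ring, Real.rpow_add hl,
    Real.rpow_neg hl.le, Real.rpow_neg hl.le, Real.rpow_one, div_eq_inv_mul q p]
  field_simp

theorem infDist_frontier_pos {E : Type*} [NormedAddCommGroup E] [NormedSpace ℝ E] [Nontrivial E]
    {Ω : Set E} (hΩo : IsOpen Ω) (hΩb : Bornology.IsBounded Ω) {x : E} (hx : x ∈ Ω) :
    0 < infDist x (frontier Ω) := by
  have hne : (frontier Ω).Nonempty := by
    refine nonempty_frontier_iff.2 ⟨⟨x, hx⟩, fun h => ?_⟩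
    exact NormedSpace.unbounded_univ ℝ E (h ▸ hΩb)
  rw [← isClosed_frontier.notMem_iff_infDist_pos hne, hΩo.frontier_eq]
  exact fun h => h.2 hx

theorem infDist_le_diam_of_subset_closure {E : Type*} [PseudoMetricSpace E] {Ω S : Set E}
    (hΩb : Bornology.IsBounded Ω) (hS : S ⊆ closure Ω) (hSne : S.Nonempty) {x : E}
    (hx : x ∈ closure Ω) : infDist x S ≤ diam Ω := by
  obtain ⟨z, hz⟩ := hSne
  calc infDist x S ≤ dist x z := infDist_le_dist_of_mem hz
    _ ≤ diam (closure Ω) := dist_le_diam_of_mem hΩb.closure hx (hS hz)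
    _ = diam Ω := diam_closure Ω

section

variable {E : Type*} [NormedAddCommGroup E] [NormedSpace ℝ E] [FiniteDimensional ℝ E]
  [MeasurableSpace E] [BorelSpace E] [Nontrivial E] (μ : Measure E) [μ.IsAddHaarMeasure]

theorem integral_ball_norm_rpow {ρ s : ℝ} (hρ : 0 ≤ ρ) (hs : -(finrank ℝ E : ℝ) < s) :
    ∫ x in ball (0 : E) ρ, ‖x‖ ^ s ∂μ =
      finrank ℝ E * μ.real (ball 0 1) * (ρ ^ (finrank ℝ E + s) / (finrank ℝ E + s)) := by
  have hball : ball (0 : E) ρ = (‖·‖) ⁻¹' Iio ρ := by ext; simp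
  have hradial : ∀ y ∈ Ioi (0 : ℝ), y ^ (finrank ℝ E - 1) • (Iio ρ).indicator (· ^ s) y =
      (Iio ρ).indicator (fun y : ℝ ↦ y ^ ((finrank ℝ E - 1 : ℝ) + s)) y := by
    intro y (hy : 0 < y)
    by_cases hyρ : y < ρ
    · simp only [indicator_of_mem (mem_Iio.2 hyρ), smul_eq_mul, Real.rpow_add hy]
      rw [← Real.rpow_natCast, Nat.cast_sub finrank_pos, Nat.cast_one]
    · simp [hyρ]
  rw [hball, ← integral_indicator (measurableSet_Iio.preimage continuous_norm.measurable)]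
  change ∫ x, (Iio ρ).indicator (· ^ s) ‖x‖ ∂μ = _
  rw [integral_fun_norm_addHaar, setIntegral_congr_fun measurableSet_Ioi hradial,
    setIntegral_indicator measurableSet_Iio, Ioi_inter_Iio, ← integral_Ioc_eq_integral_Ioo,
    ← intervalIntegral.integral_of_le hρ, integral_rpow (Or.inl (by linarith))]
  rw [Real.zero_rpow (by linarith), sub_zero, nsmul_eq_mul, smul_eq_mul, mul_assoc,
    show (finrank ℝ E - 1 : ℝ) + s + 1 = finrank ℝ E + s by ring]

theorem lintegral_ball_dist_rpow (y : E) {ρ s : ℝ} (hρ : 0 ≤ ρ) (hs : -(finrank ℝ E : ℝ) < s) :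
    ∫⁻ x in ball y ρ, ENNReal.ofReal (dist x y ^ s) ∂μ =
      ENNReal.ofReal
        (finrank ℝ E * μ.real (ball 0 1) * (ρ ^ (finrank ℝ E + s) / (finrank ℝ E + s))) := by
  have htranslate : ∫⁻ x in ball y ρ, ENNReal.ofReal (dist x y ^ s) ∂μ =
      ∫⁻ x in ball 0 ρ, ENNReal.ofReal (‖x‖ ^ s) ∂μ := by
    rw [← lintegral_indicator measurableSet_ball, ← lintegral_indicator measurableSet_ball,
      ← lintegral_sub_right_eq_self (μ := μ) ((ball 0 ρ).indicator _) y]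
    congr with x
    simp only [indicator, mem_ball, dist_eq_norm, sub_zero]
  have hint : IntegrableOn (fun x : E ↦ ‖x‖ ^ s) (ball 0 ρ) μ :=
    integrableOn_ball_of_norm_le_rpow finrank_pos (C := 1) (α := -s) (by linarith)
      (.of_forall fun x ↦ by simp [abs_of_nonneg (Real.rpow_nonneg (norm_nonneg x) s)])
      (continuous_norm.measurable.pow_const s).aestronglyMeasurable
  rw [htranslate, ← integral_ball_norm_rpow μ hρ hs,
    ofReal_integral_eq_lintegral_ofReal hint (.of_forall fun x ↦ by positivity)]

theorem setLIntegral_levelSet_le {Ω S : Set E} (hΩo : IsOpen Ω)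
    (hΩb : Bornology.IsBounded Ω) (hS : S ⊆ frontier Ω) (hSne : S.Nonempty)
    {γ α l D : ℝ} (hγ1 : γ ≤ 1) (hp : 0 < finrank ℝ E + γ - 1) (hα : 0 ≤ α)
    (hD : diam Ω ≤ D) (hl : 0 < l) (y : E) :
    ∫⁻ x in {x ∈ Ω | x ≠ y ∧
        l < dist x y ^ ((2 : ℝ) - finrank ℝ E) *
            min (infDist y (frontier Ω))⁻¹ (infDist x (frontier Ω) / dist x y ^ (2 : ℝ)) *
            (min (infDist x (frontier Ω)) (dist x y)) ^ (-γ) *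
            infDist x S ^ α},
      ENNReal.ofReal (infDist x (frontier Ω) * infDist x S ^ (-α)) ∂μ ≤
    ENNReal.ofReal (4 * finrank ℝ E * μ.real (ball 0 1) / (2 - γ) *
      (4 * D ^ α) ^ ((2 - γ) / (finrank ℝ E + γ - 1)) *
      l ^ (-((finrank ℝ E + 1) / (finrank ℝ E + γ - 1)))) := by
  set n : ℝ := (finrank ℝ E : ℝ)
  set ρ := (4 * D ^ α / l) ^ (n + γ - 1)⁻¹
  have hbounds := fun x (hx : x ∈ Ω) (hxy : x ≠ y) =>
    levelSet_bounds (n := n) (b := infDist y (frontier Ω)) hγ1 hp hα hl (dist_pos.2 hxy)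
      (infDist_frontier_pos hΩo hΩb hx) (sub_le_iff_le_add.2 infDist_le_infDist_add_dist)
      infDist_nonneg ((infDist_le_diam_of_subset_closure hΩb
        (hS.trans frontier_subset_closure) hSne (subset_closure hx)).trans hD)
  have hD0 : 0 ≤ D := diam_nonneg.trans hD
  have hρ : 0 ≤ ρ := by positivity
  have hscale : l⁻¹ * ρ ^ (2 - γ) =
      (4 * D ^ α) ^ ((2 - γ) / (n + γ - 1)) * l ^ (-((n + 1) / (n + γ - 1))) := by
    rw [inv_mul_rpow_div_rpow_inv (by positivity) hl hp.ne',
      show n + γ - 1 + (2 - γ) = n + 1 by ring]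
  calc _ ≤ ∫⁻ x in _, ENNReal.ofReal (4 * l⁻¹ * dist x y ^ (2 - n - γ)) ∂μ :=
        setLIntegral_mono (by fun_prop) fun x hx =>
          ENNReal.ofReal_le_ofReal (hbounds x hx.1 hx.2.1 hx.2.2).2
    _ ≤ ∫⁻ x in ball y ρ, ENNReal.ofReal (4 * l⁻¹ * dist x y ^ (2 - n - γ)) ∂μ :=
        lintegral_mono_set fun x hx => mem_ball.2 (hbounds x hx.1 hx.2.1 hx.2.2).1
    _ = ENNReal.ofReal (4 * l⁻¹ * (n * μ.real (ball 0 1) * (ρ ^ (2 - γ) / (2 - γ)))) := by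
        simp_rw [ENNReal.ofReal_mul (by positivity : (0 : ℝ) ≤ 4 * l⁻¹)]
        rw [lintegral_const_mul _ (by fun_prop), lintegral_ball_dist_rpow μ y hρ (by linarith),
          show n + (2 - n - γ) = 2 - γ by ring]
    _ = _ := by
        congr 1
        linear_combination (4 * n * μ.real (ball 0 1) / (2 - γ)) * hscale

end

theorem stmt_2_general {N : ℕ} (hN : 3 ≤ N) (Ω S : Set (EuclideanSpace ℝ (Fin N)))
    (hΩo : IsOpen Ω) (hΩb : Bornology.IsBounded Ω)
    (hS : S ⊆ frontier Ω) (hSne : S.Nonempty)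
    (γ α : ℝ) (hγ0 : 0 ≤ γ) (hγ1 : γ ≤ 1) (hα : 0 ≤ α) :
    ∃ C > 0, ∀ y ∈ Ω, ∀ l : ℝ, 0 < l →
      ∫⁻ x in {x ∈ Ω | x ≠ y ∧
          l < dist x y ^ ((2 : ℝ) - N) *
              min (infDist y (frontier Ω))⁻¹ (infDist x (frontier Ω) / dist x y ^ (2 : ℝ)) *
              (min (infDist x (frontier Ω)) (dist x y)) ^ (-γ) *
              infDist x S ^ α},
        ENNReal.ofReal (infDist x (frontier Ω) * infDist x S ^ (-α)) ≤
      ENNReal.ofReal (C * l ^ (-(((N : ℝ) + 1) / ((N : ℝ) + γ - 1)))) := by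
  have : Nonempty (Fin N) := ⟨⟨0, by omega⟩⟩
  have hN' : (3 : ℝ) ≤ N := by exact_mod_cast hN
  have hV : 0 < volume.real (ball (0 : EuclideanSpace ℝ (Fin N)) 1) :=
    ENNReal.toReal_pos (measure_ball_pos _ _ one_pos).ne' measure_ball_lt_top.ne
  refine ⟨4 * N * volume.real (ball (0 : EuclideanSpace ℝ (Fin N)) 1) / (2 - γ) *
    (4 * (diam Ω + 1) ^ α) ^ ((2 - γ) / (N + γ - 1)), ?_, fun y _ l hl => ?_⟩
  · have : 0 < 2 - γ := by linarith
    positivity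
  have := setLIntegral_levelSet_le volume hΩo hΩb hS hSne hγ1
    (by rw [finrank_euclideanSpace_fin]; linarith) hα (le_add_of_nonneg_right zero_le_one) hl y
  simpa only [finrank_euclideanSpace_fin] using this

/-- Level-set estimate for the kernel
`F₁(x,y) = |x−y|^{2−N} · min{1/d(y), d(x)/|x−y|²} · min{d(x), |x−y|}^{−γ} · d_Σ(x)^{α}`. -/
theorem stmt_2 {N : ℕ} (hN : 3 ≤ N) (Ω S : Set (EuclideanSpace ℝ (Fin N)))
    (hΩo : IsOpen Ω) (hΩb : Bornology.IsBounded Ω)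
    (hS : S ⊆ frontier Ω) (hSne : S.Nonempty) (hSc : IsCompact S)
    (γ α : ℝ) (hγ0 : 0 ≤ γ) (hγ1 : γ ≤ 1) (hα : 0 ≤ α) :
    ∃ C > 0, ∀ y ∈ Ω, ∀ l : ℝ, 0 < l →
      ∫⁻ x in {x ∈ Ω | x ≠ y ∧
          l < dist x y ^ ((2 : ℝ) - N) *
              min (infDist y (frontier Ω))⁻¹ (infDist x (frontier Ω) / dist x y ^ (2 : ℝ)) *
              (min (infDist x (frontier Ω)) (dist x y)) ^ (-γ) *
              infDist x S ^ α},
        ENNReal.ofReal (infDist x (frontier Ω) * infDist x S ^ (-α)) ≤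
      ENNReal.ofReal (C * l ^ (-(((N : ℝ) + 1) / ((N : ℝ) + γ - 1)))) :=
  stmt_2_general hN Ω S hΩo hΩb hS hSne γ α hγ0 hγ1 hα
end

section
/- Let γ ∈ [0,1] and 0 < α < N + γ − 1, and define for x, y ∈ Ω with x ≠ y the kernel F₂(x,y) := |x−y|^{2−N+2α} · min{ 1/d(y), d(x)/|x−y|² } · min{ d(x), |x−y| }^{−γ} · d_Σ(x)^{−α}. Then there exists a constant C > 0, depending only on N, α and γ, such that for every y ∈ Ω and every λ > 0, ∫_{{x ∈ Ω \ {y} : d_Σ(x) ≥ |x−y| and F₂(x,y) > λ}} d(x) d_Σ(x)^{−α} dx ≤ C λ^{−(N−α+1)/(N−α+γ−1)}. -/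
open MeasureTheory Set Metric
open scoped ENNReal


lemma aux_radial {N : ℕ} (hN : 1 ≤ N) (p : ℝ) (hp : -(N : ℝ) < p) :
    ∃ K > 0, ∀ (y : EuclideanSpace ℝ (Fin N)) (ρ : ℝ), 0 < ρ →
      ∫⁻ x in closedBall y ρ \ {y}, ENNReal.ofReal (dist x y ^ p) ≤
        ENNReal.ofReal (K * ρ ^ ((N : ℝ) + p)) := by
  classical
  set E := EuclideanSpace ℝ (Fin N)
  have hNp : 0 < (N : ℝ) + p := by linarith
  set q : ℝ := (1 / 2 : ℝ) ^ ((N : ℝ) + p) with hq_def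
  have hq0 : 0 < q := Real.rpow_pos_of_pos (by norm_num) _
  have hq1 : q < 1 := Real.rpow_lt_one (by norm_num) (by norm_num) hNp
  set M : ℝ := max 1 ((2 : ℝ) ^ (-p)) with hM_def
  have hM1 : (1 : ℝ) ≤ M := le_max_left _ _
  set V : ℝ := (volume (ball (0 : E) 1)).toReal with hV_def
  have hV0 : 0 ≤ V := ENNReal.toReal_nonneg
  have hVeq : volume (ball (0 : E) 1) = ENNReal.ofReal V := by
    rw [hV_def, ENNReal.ofReal_toReal measure_ball_lt_top.ne]
  have h1q : (0:ℝ) < 1 - q := by linarith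
  have hK0 : (0:ℝ) < M * V * (1 - q)⁻¹ + 1 := by
    have : (0:ℝ) ≤ M * V * (1 - q)⁻¹ :=
      mul_nonneg (mul_nonneg (by linarith) hV0) (inv_nonneg.2 h1q.le)
    linarith
  refine ⟨M * V * (1 - q)⁻¹ + 1, hK0, fun y ρ hρ => ?_⟩
  -- annuli
  set t : ℕ → ℝ := fun k => ρ * (1 / 2 : ℝ) ^ k with ht_def
  have ht0 : ∀ k, 0 < t k := fun k => by positivity
  have htsucc : ∀ k, t (k + 1) = t k / 2 := fun k => by
    simp only [ht_def, pow_succ]; ring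
  set A : ℕ → Set E := fun k => closedBall y (t k) \ closedBall y (t (k + 1)) with hA_def
  have hcover : closedBall y ρ \ {y} ⊆ ⋃ k, A k := by
    rintro x ⟨hx1, hx2⟩
    have hd0 : 0 < dist x y := dist_pos.2 (by simpa using hx2)
    have hdρ : dist x y ≤ ρ := mem_closedBall.1 hx1
    have hex : ∃ k : ℕ, ρ * (1 / 2 : ℝ) ^ (k + 1) < dist x y := by
      obtain ⟨n, hn⟩ := exists_pow_lt_of_lt_one (div_pos hd0 hρ) (by norm_num : (1/2 : ℝ) < 1)
      refine ⟨n, ?_⟩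
      have : (1 / 2 : ℝ) ^ (n + 1) ≤ (1 / 2 : ℝ) ^ n :=
        pow_le_pow_of_le_one (by norm_num) (by norm_num) (Nat.le_succ n)
      calc ρ * (1 / 2 : ℝ) ^ (n + 1) ≤ ρ * (1 / 2 : ℝ) ^ n := by nlinarith
        _ < ρ * (dist x y / ρ) := by nlinarith
        _ = dist x y := by field_simp
    set k := Nat.find hex with hk_def
    have hk1 : ρ * (1 / 2 : ℝ) ^ (k + 1) < dist x y := Nat.find_spec hex
    have hk2 : dist x y ≤ t k := by
      rcases Nat.eq_zero_or_pos k with h0 | h0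
      · simpa [ht_def, h0] using hdρ
      · have := Nat.find_min hex (m := k - 1) (by omega)
        push_neg at this
        have hk1eq : k - 1 + 1 = k := by omega
        rw [hk1eq] at this
        simpa [ht_def] using this
    exact mem_iUnion.2 ⟨k, ⟨mem_closedBall.2 hk2, fun h => absurd (mem_closedBall.1 h)
      (not_le.2 (by simpa [ht_def] using hk1))⟩⟩
  calc ∫⁻ x in closedBall y ρ \ {y}, ENNReal.ofReal (dist x y ^ p) ∂volume
      ≤ ∫⁻ x in ⋃ k, A k, ENNReal.ofReal (dist x y ^ p) ∂volume :=
        lintegral_mono' (Measure.restrict_mono hcover le_rfl) le_rfl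
    _ ≤ ∑' k, ∫⁻ x in A k, ENNReal.ofReal (dist x y ^ p) ∂volume :=
        lintegral_iUnion_le _ _
    _ ≤ ∑' k, ENNReal.ofReal (M * V * ρ ^ ((N : ℝ) + p)) * ENNReal.ofReal q ^ k := by
        refine ENNReal.tsum_le_tsum fun k => ?_
        have hAmeas : MeasurableSet (A k) :=
          measurableSet_closedBall.diff measurableSet_closedBall
        have hpt : ∀ x ∈ A k, ENNReal.ofReal (dist x y ^ p) ≤
            ENNReal.ofReal (M * t k ^ p) := by
          rintro x ⟨hx1, hx2⟩
          have hd1 : dist x y ≤ t k := mem_closedBall.1 hx1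
          have hd2 : t k / 2 < dist x y := by
            have := not_le.1 (fun h => hx2 (mem_closedBall.2 h))
            rw [← htsucc k]; exact this
          have hd0 : 0 < dist x y := lt_trans (by positivity) hd2
          refine ENNReal.ofReal_le_ofReal ?_
          rcases le_or_gt 0 p with hp0 | hp0
          · calc dist x y ^ p ≤ t k ^ p := Real.rpow_le_rpow hd0.le hd1 hp0
              _ ≤ M * t k ^ p := le_mul_of_one_le_left (by positivity) hM1
          · calc dist x y ^ p ≤ (t k / 2) ^ p :=
                  Real.rpow_le_rpow_of_nonpos (by positivity) hd2.le hp0.le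
              _ = t k ^ p * (2:ℝ) ^ (-p) := by
                  rw [Real.div_rpow (ht0 k).le (by norm_num), Real.rpow_neg (by norm_num)]
                  ring
              _ ≤ M * t k ^ p := by
                  have : (2:ℝ) ^ (-p) ≤ M := le_max_right _ _
                  nlinarith [Real.rpow_pos_of_pos (ht0 k) p]
        calc ∫⁻ x in A k, ENNReal.ofReal (dist x y ^ p) ∂volume
            ≤ ∫⁻ _ in A k, ENNReal.ofReal (M * t k ^ p) ∂volume :=
              setLIntegral_mono' hAmeas hpt
          _ = ENNReal.ofReal (M * t k ^ p) * volume (A k) := setLIntegral_const _ _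
          _ ≤ ENNReal.ofReal (M * t k ^ p) * volume (closedBall y (t k)) := by
              gcongr; exact diff_subset
          _ = ENNReal.ofReal (M * t k ^ p * (t k ^ ((N : ℝ)) * V)) := by
              rw [Measure.addHaar_closedBall _ _ (ht0 k).le, hVeq]
              have hfr : (Module.finrank ℝ E : ℝ) = (N : ℝ) := by
                norm_cast; exact finrank_euclideanSpace_fin
              have h1 : (t k : ℝ) ^ (Module.finrank ℝ E) = t k ^ ((N : ℝ)) := by
                rw [← Real.rpow_natCast (t k) (Module.finrank ℝ E), hfr]
              rw [h1, ← ENNReal.ofReal_mul (by positivity),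
                ← ENNReal.ofReal_mul (by positivity)]
          _ = ENNReal.ofReal (M * V * ρ ^ ((N : ℝ) + p) * q ^ k) := by
              congr 1
              have h2 : t k ^ p * t k ^ ((N : ℝ)) = t k ^ ((N : ℝ) + p) := by
                rw [← Real.rpow_add (ht0 k)]; ring_nf
              have h3 : t k ^ ((N : ℝ) + p) = ρ ^ ((N : ℝ) + p) * q ^ k := by
                rw [ht_def]
                rw [Real.mul_rpow hρ.le (by positivity)]
                congr 1
                rw [← Real.rpow_natCast ((1/2 : ℝ)) k, ← Real.rpow_natCast q k, hq_def,
                  ← Real.rpow_mul (by norm_num), ← Real.rpow_mul (by norm_num)]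
                ring_nf
              calc M * t k ^ p * (t k ^ ((N : ℝ)) * V)
                  = M * V * (t k ^ p * t k ^ ((N:ℝ))) := by ring
                _ = M * V * (ρ ^ ((N : ℝ) + p) * q ^ k) := by rw [h2, h3]
                _ = M * V * ρ ^ ((N : ℝ) + p) * q ^ k := by ring
          _ = ENNReal.ofReal (M * V * ρ ^ ((N : ℝ) + p)) * ENNReal.ofReal q ^ k := by
              rw [ENNReal.ofReal_mul (by positivity), ENNReal.ofReal_pow hq0.le]
    _ = ENNReal.ofReal (M * V * ρ ^ ((N : ℝ) + p)) * (1 - ENNReal.ofReal q)⁻¹ := by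
        rw [ENNReal.tsum_mul_left, ENNReal.tsum_geometric]
    _ ≤ ENNReal.ofReal ((M * V * (1 - q)⁻¹ + 1) * ρ ^ ((N : ℝ) + p)) := by
        have h1 : (1 : ℝ≥0∞) - ENNReal.ofReal q = ENNReal.ofReal (1 - q) := by
          rw [ENNReal.ofReal_sub _ hq0.le, ENNReal.ofReal_one]
        rw [h1, ← ENNReal.ofReal_inv_of_pos (by linarith), ← ENNReal.ofReal_mul (by positivity)]
        refine ENNReal.ofReal_le_ofReal ?_
        have hρp : (0:ℝ) < ρ ^ ((N : ℝ) + p) := Real.rpow_pos_of_pos hρ _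
        nlinarith [mul_nonneg (mul_nonneg (le_trans zero_le_one hM1) hV0)
          (inv_nonneg.2 (by linarith : (0:ℝ) ≤ 1 - q))]




lemma rpow_one_sub' {x c : ℝ} (hx : 0 < x) : x ^ (1 - c) = x * x ^ (-c) := by
  rw [show (1 - c) = 1 + (-c) by ring, Real.rpow_add hx, Real.rpow_one]

lemma point_key {Nr l r a b s γ α : ℝ} (hNr : 3 ≤ Nr) (hγ0 : 0 ≤ γ) (hγ1 : γ ≤ 1)
    (hα0 : 0 < α) (hl : 0 < l) (hr0 : 0 < r) (ha0 : 0 < a) (hb0 : 0 < b)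
    (hs_r : r ≤ s) (hs_a : a ≤ s) (hab : a ≤ b + r)
    (hF : l < r ^ ((2 : ℝ) - Nr + 2 * α) * min b⁻¹ (a / r ^ (2 : ℝ)) *
      (min a r) ^ (-γ) * s ^ (-α)) :
    l * r ^ (Nr - α + γ - 1) < 2 ∧
    (a ≤ 2 * r → a * s ^ (-α) ≤ 2 * r ^ (1 - α)) ∧
    (2 * r < a → l * a ^ (1 + α) < 2 * r ^ ((2 : ℝ) - Nr + 2 * α - γ)) := by
  have hs0 : 0 < s := lt_of_lt_of_le hr0 hs_r
  have hrp : ∀ z : ℝ, 0 < r ^ z := fun z => Real.rpow_pos_of_pos hr0 z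
  have hap : ∀ z : ℝ, 0 < a ^ z := fun z => Real.rpow_pos_of_pos ha0 z
  have hsα : s ^ (-α) ≤ r ^ (-α) :=
    Real.rpow_le_rpow_of_nonpos hr0 hs_r (by linarith)
  have hsa : s ^ (-α) ≤ a ^ (-α) :=
    Real.rpow_le_rpow_of_nonpos ha0 hs_a (by linarith)
  have hmin0 : (0 : ℝ) ≤ min a r := le_min ha0.le hr0.le
  have hminp : (0 : ℝ) ≤ (min a r) ^ (-γ) := Real.rpow_nonneg hmin0 _
  set e1 : ℝ := (2 : ℝ) - Nr + 2 * α with he1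
  have n1 : (0 : ℝ) ≤ r ^ e1 := (hrp e1).le
  have nm1 : (0 : ℝ) ≤ min b⁻¹ (a / r ^ (2 : ℝ)) :=
    le_min (inv_nonneg.2 hb0.le) (div_nonneg ha0.le (hrp 2).le)
  refine ⟨?_, ?_, ?_⟩
  · -- l * r^(Nr-α+γ-1) < 2
    have key : l < 2 * r ^ (-(Nr - α + γ - 1)) := by
      rcases le_or_gt a (2 * r) with hc | hc
      · have hm2 : a * (min a r) ^ (-γ) ≤ 2 * r ^ (1 - γ) := by
          rcases le_total a r with h | h
          · rw [min_eq_left h]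
            calc a * a ^ (-γ) = a ^ (1 - γ) := (rpow_one_sub' ha0).symm
              _ ≤ r ^ (1 - γ) := Real.rpow_le_rpow ha0.le h (by linarith)
              _ ≤ 2 * r ^ (1 - γ) := by nlinarith [(hrp (1 - γ)).le]
          · rw [min_eq_right h]
            calc a * r ^ (-γ) ≤ (2 * r) * r ^ (-γ) :=
                  mul_le_mul_of_nonneg_right hc (hrp _).le
              _ = 2 * (r * r ^ (-γ)) := by ring
              _ = 2 * r ^ (1 - γ) := by rw [← rpow_one_sub' hr0]
        calc l < r ^ e1 * min b⁻¹ (a / r ^ (2:ℝ)) * (min a r) ^ (-γ) * s ^ (-α) := hF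
          _ ≤ r ^ e1 * (a / r ^ (2:ℝ)) * (min a r) ^ (-γ) * r ^ (-α) := by
              apply mul_le_mul _ hsα (Real.rpow_nonneg hs0.le _)
              · exact mul_nonneg (mul_nonneg n1 (div_nonneg ha0.le (hrp 2).le)) hminp
              · exact mul_le_mul_of_nonneg_right
                  (mul_le_mul_of_nonneg_left (min_le_right _ _) n1) hminp
          _ = (r ^ e1 * (r ^ (2:ℝ))⁻¹ * r ^ (-α)) * (a * (min a r) ^ (-γ)) := by
              ring
          _ ≤ (r ^ e1 * (r ^ (2:ℝ))⁻¹ * r ^ (-α)) * (2 * r ^ (1 - γ)) := by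
              apply mul_le_mul_of_nonneg_left hm2
              exact mul_nonneg (mul_nonneg n1 (inv_nonneg.2 (hrp 2).le)) (hrp _).le
          _ = 2 * (r ^ e1 * r ^ (-2:ℝ) * r ^ (-α) * r ^ (1 - γ)) := by
              rw [← Real.rpow_neg hr0.le]; ring
          _ = 2 * r ^ (e1 + -2 + -α + (1 - γ)) := by
              rw [← Real.rpow_add hr0, ← Real.rpow_add hr0, ← Real.rpow_add hr0]
          _ = 2 * r ^ (-(Nr - α + γ - 1)) := by rw [he1]; ring_nf
      · have hba : a / 2 ≤ b := by linarith
        have hbinv : b⁻¹ ≤ r⁻¹ := inv_anti₀ hr0 (by linarith)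
        have hminr : min a r = r := min_eq_right (by linarith)
        calc l < r ^ e1 * min b⁻¹ (a / r ^ (2:ℝ)) * (min a r) ^ (-γ) * s ^ (-α) := hF
          _ ≤ r ^ e1 * r⁻¹ * r ^ (-γ) * r ^ (-α) := by
              rw [hminr]
              apply mul_le_mul _ hsα (Real.rpow_nonneg hs0.le _)
              · exact mul_nonneg (mul_nonneg n1 (inv_nonneg.2 hr0.le)) (hrp _).le
              · exact mul_le_mul_of_nonneg_right
                  (mul_le_mul_of_nonneg_left ((min_le_left _ _).trans hbinv) n1) (hrp _).le
          _ = r ^ e1 * r ^ (-1:ℝ) * r ^ (-γ) * r ^ (-α) := by rw [Real.rpow_neg_one]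
          _ = r ^ (e1 + -1 + -γ + -α) := by
              rw [← Real.rpow_add hr0, ← Real.rpow_add hr0, ← Real.rpow_add hr0]
          _ = r ^ (-(Nr - α + γ - 1)) := by rw [he1]; ring_nf
          _ ≤ 2 * r ^ (-(Nr - α + γ - 1)) := by nlinarith [(hrp (-(Nr - α + γ - 1))).le]
    have hmul := mul_lt_mul_of_pos_right key (hrp (Nr - α + γ - 1))
    rw [mul_assoc, ← Real.rpow_add hr0] at hmul
    simpa using hmul
  · intro hc
    calc a * s ^ (-α) ≤ (2 * r) * r ^ (-α) :=
          mul_le_mul hc hsα (Real.rpow_nonneg hs0.le _) (by linarith)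
      _ = 2 * (r * r ^ (-α)) := by ring
      _ = 2 * r ^ (1 - α) := by rw [← rpow_one_sub' hr0]
  · intro hc
    have hba : a / 2 ≤ b := by linarith
    have hbinv : b⁻¹ ≤ 2 * a⁻¹ := by
      have h1 : b⁻¹ ≤ (a / 2)⁻¹ := inv_anti₀ (by linarith) hba
      rw [inv_div, div_eq_mul_inv] at h1
      linarith
    have hminr : min a r = r := min_eq_right (by linarith)
    have key : l < 2 * r ^ (e1 - γ) * a ^ (-(1 + α)) := by
      calc l < r ^ e1 * min b⁻¹ (a / r ^ (2:ℝ)) * (min a r) ^ (-γ) * s ^ (-α) := hF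
        _ ≤ r ^ e1 * (2 * a⁻¹) * r ^ (-γ) * a ^ (-α) := by
            rw [hminr]
            apply mul_le_mul _ hsa (Real.rpow_nonneg hs0.le _)
            · exact mul_nonneg (mul_nonneg n1 (by positivity)) (hrp _).le
            · exact mul_le_mul_of_nonneg_right
                (mul_le_mul_of_nonneg_left ((min_le_left _ _).trans hbinv) n1) (hrp _).le
        _ = 2 * (r ^ e1 * r ^ (-γ)) * (a ^ (-1:ℝ) * a ^ (-α)) := by
            rw [Real.rpow_neg_one]; ring
        _ = 2 * r ^ (e1 + -γ) * a ^ (-1 + -α) := by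
            rw [← Real.rpow_add hr0, ← Real.rpow_add ha0]
        _ = 2 * r ^ (e1 - γ) * a ^ (-(1 + α)) := by
            rw [show e1 + -γ = e1 - γ from by ring, show (-1:ℝ) + -α = -(1+α) from by ring]
    have hmul := mul_lt_mul_of_pos_right key (hap (1 + α))
    rw [mul_assoc, mul_assoc, ← Real.rpow_add ha0] at hmul
    simp only [neg_add_cancel, Real.rpow_zero, mul_one] at hmul
    rw [he1] at hmul
    calc l * a ^ (1 + α) = l * a ^ (1 + α) := rfl
      _ < 2 * r ^ ((2:ℝ) - Nr + 2 * α - γ) := by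
          convert hmul using 3 <;> ring

/-- Bridge lemma: integral over the set bounded via radial majorants. -/
lemma glue_bound {N : ℕ} {Es : Set (EuclideanSpace ℝ (Fin N))} (hEm : MeasurableSet Es)
    {y : EuclideanSpace ℝ (Fin N)} {ρ c1 p1 c2 p2 K1 K2 : ℝ}
    (hc1 : 0 ≤ c1) (hc2 : 0 ≤ c2) (hK1 : 0 ≤ K1) (hK2 : 0 ≤ K2) (hρ : 0 < ρ)
    (hsub : Es ⊆ closedBall y ρ \ {y})
    (hI1 : ∫⁻ x in closedBall y ρ \ {y}, ENNReal.ofReal (dist x y ^ p1) ≤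
      ENNReal.ofReal (K1 * ρ ^ ((N : ℝ) + p1)))
    (hI2 : ∫⁻ x in closedBall y ρ \ {y}, ENNReal.ofReal (dist x y ^ p2) ≤
      ENNReal.ofReal (K2 * ρ ^ ((N : ℝ) + p2)))
    (f : EuclideanSpace ℝ (Fin N) → ℝ)
    (hpt : ∀ x ∈ Es, f x ≤ c1 * dist x y ^ p1 + c2 * dist x y ^ p2) :
    ∫⁻ x in Es, ENNReal.ofReal (f x) ≤
      ENNReal.ofReal (c1 * (K1 * ρ ^ ((N : ℝ) + p1)) + c2 * (K2 * ρ ^ ((N : ℝ) + p2))) := by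
  have hm1 : Measurable fun x : EuclideanSpace ℝ (Fin N) =>
      ENNReal.ofReal (c1 * dist x y ^ p1) :=
    ((((continuous_id.dist continuous_const).measurable).pow measurable_const).const_mul
      c1).ennreal_ofReal
  have hρ1 : (0:ℝ) ≤ K1 * ρ ^ ((N : ℝ) + p1) :=
    mul_nonneg hK1 (Real.rpow_nonneg hρ.le _)
  have hρ2 : (0:ℝ) ≤ K2 * ρ ^ ((N : ℝ) + p2) :=
    mul_nonneg hK2 (Real.rpow_nonneg hρ.le _)
  calc ∫⁻ x in Es, ENNReal.ofReal (f x)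
      ≤ ∫⁻ x in Es, (ENNReal.ofReal (c1 * dist x y ^ p1) +
          ENNReal.ofReal (c2 * dist x y ^ p2)) := by
        refine setLIntegral_mono' hEm fun x hx => ?_
        exact (ENNReal.ofReal_le_ofReal (hpt x hx)).trans ENNReal.ofReal_add_le
    _ ≤ ∫⁻ x in closedBall y ρ \ {y}, (ENNReal.ofReal (c1 * dist x y ^ p1) +
          ENNReal.ofReal (c2 * dist x y ^ p2)) :=
        lintegral_mono' (Measure.restrict_mono hsub le_rfl) le_rfl
    _ = (∫⁻ x in closedBall y ρ \ {y}, ENNReal.ofReal (c1 * dist x y ^ p1)) +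
        ∫⁻ x in closedBall y ρ \ {y}, ENNReal.ofReal (c2 * dist x y ^ p2) :=
        lintegral_add_left hm1 _
    _ ≤ ENNReal.ofReal (c1 * (K1 * ρ ^ ((N : ℝ) + p1))) +
        ENNReal.ofReal (c2 * (K2 * ρ ^ ((N : ℝ) + p2))) := by
        refine add_le_add ?_ ?_
        · calc ∫⁻ x in closedBall y ρ \ {y}, ENNReal.ofReal (c1 * dist x y ^ p1)
              = ENNReal.ofReal c1 * ∫⁻ x in closedBall y ρ \ {y},
                  ENNReal.ofReal (dist x y ^ p1) := by
                simp_rw [ENNReal.ofReal_mul hc1]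
                exact lintegral_const_mul' _ _ ENNReal.ofReal_ne_top
            _ ≤ ENNReal.ofReal c1 * ENNReal.ofReal (K1 * ρ ^ ((N : ℝ) + p1)) :=
                mul_le_mul_right hI1 _
            _ = ENNReal.ofReal (c1 * (K1 * ρ ^ ((N : ℝ) + p1))) :=
                (ENNReal.ofReal_mul hc1).symm
        · calc ∫⁻ x in closedBall y ρ \ {y}, ENNReal.ofReal (c2 * dist x y ^ p2)
              = ENNReal.ofReal c2 * ∫⁻ x in closedBall y ρ \ {y},
                  ENNReal.ofReal (dist x y ^ p2) := by
                simp_rw [ENNReal.ofReal_mul hc2]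
                exact lintegral_const_mul' _ _ ENNReal.ofReal_ne_top
            _ ≤ ENNReal.ofReal c2 * ENNReal.ofReal (K2 * ρ ^ ((N : ℝ) + p2)) :=
                mul_le_mul_right hI2 _
            _ = ENNReal.ofReal (c2 * (K2 * ρ ^ ((N : ℝ) + p2))) :=
                (ENNReal.ofReal_mul hc2).symm
    _ = ENNReal.ofReal (c1 * (K1 * ρ ^ ((N : ℝ) + p1)) +
          c2 * (K2 * ρ ^ ((N : ℝ) + p2))) :=
        (ENNReal.ofReal_add (mul_nonneg hc1 hρ1) (mul_nonneg hc2 hρ2)).symm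


lemma point_all {N : ℕ} (hN : 3 ≤ N) (Ω S : Set (EuclideanSpace ℝ (Fin N)))
    (hΩo : IsOpen Ω) (hS : S ⊆ frontier Ω) (hSne : S.Nonempty)
    {γ α : ℝ} (hγ0 : 0 ≤ γ) (hγ1 : γ ≤ 1) (hα0 : 0 < α)
    {y : EuclideanSpace ℝ (Fin N)} (hy : y ∈ Ω) {l : ℝ} (hl : 0 < l)
    {x : EuclideanSpace ℝ (Fin N)}
    (hx : x ∈ {x ∈ Ω | x ≠ y ∧ infDist x S ≥ dist x y ∧
      l < dist x y ^ ((2 : ℝ) - N + 2 * α) *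
          min (infDist y (frontier Ω))⁻¹ (infDist x (frontier Ω) / dist x y ^ (2 : ℝ)) *
          (min (infDist x (frontier Ω)) (dist x y)) ^ (-γ) *
          infDist x S ^ (-α)}) :
    0 < dist x y ∧ 0 < infDist x (frontier Ω) ∧ infDist x (frontier Ω) ≤ infDist x S ∧
    dist x y ≤ infDist x S ∧
    l * dist x y ^ ((N : ℝ) - α + γ - 1) < 2 ∧
    (infDist x (frontier Ω) ≤ 2 * dist x y →
      infDist x (frontier Ω) * infDist x S ^ (-α) ≤ 2 * dist x y ^ (1 - α)) ∧
    (2 * dist x y < infDist x (frontier Ω) →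
      l * infDist x (frontier Ω) ^ (1 + α) < 2 * dist x y ^ ((2 : ℝ) - N + 2 * α - γ)) := by
  obtain ⟨hxΩ, hxy, hds, hF⟩ := hx
  have hN3 : (3 : ℝ) ≤ (N : ℝ) := by exact_mod_cast hN
  have hfront_ne : (frontier Ω).Nonempty := hSne.mono hS
  have hr0 : 0 < dist x y := dist_pos.2 hxy
  have hnotin : ∀ z ∈ Ω, z ∉ frontier Ω := fun z hz hzf => by
    rw [hΩo.frontier_eq] at hzf; exact hzf.2 hz
  have ha0 : 0 < infDist x (frontier Ω) :=
    (isClosed_frontier.notMem_iff_infDist_pos hfront_ne).1 (hnotin x hxΩ)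
  have hb0 : 0 < infDist y (frontier Ω) :=
    (isClosed_frontier.notMem_iff_infDist_pos hfront_ne).1 (hnotin y hy)
  have hs_a : infDist x (frontier Ω) ≤ infDist x S := infDist_le_infDist_of_subset hS hSne
  have hs_r : dist x y ≤ infDist x S := hds
  have hab : infDist x (frontier Ω) ≤ infDist y (frontier Ω) + dist x y :=
    infDist_le_infDist_add_dist
  obtain ⟨k1, k2, k3⟩ := point_key hN3 hγ0 hγ1 hα0 hl hr0 ha0 hb0 hs_r hs_a hab hF
  exact ⟨hr0, ha0, hs_a, hs_r, k1, k2, k3⟩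

set_option maxHeartbeats 2000000 in
/-- Level-set estimate for the kernel
`F₂(x,y) = |x−y|^{2−N+2α} · min{1/d(y), d(x)/|x−y|²} · min{d(x), |x−y|}^{−γ} · d_Σ(x)^{−α}`
on the region `d_Σ(x) ≥ |x−y|`. -/
theorem stmt_3 {N : ℕ} (hN : 3 ≤ N) (Ω S : Set (EuclideanSpace ℝ (Fin N)))
    (hΩo : IsOpen Ω) (hΩb : Bornology.IsBounded Ω)
    (hS : S ⊆ frontier Ω) (hSne : S.Nonempty) (hSc : IsCompact S)
    (γ α : ℝ) (hγ0 : 0 ≤ γ) (hγ1 : γ ≤ 1) (hα0 : 0 < α) (hα1 : α < (N : ℝ) + γ - 1) :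
    ∃ C > 0, ∀ y ∈ Ω, ∀ l : ℝ, 0 < l →
      ∫⁻ x in {x ∈ Ω | x ≠ y ∧ infDist x S ≥ dist x y ∧
          l < dist x y ^ ((2 : ℝ) - N + 2 * α) *
              min (infDist y (frontier Ω))⁻¹ (infDist x (frontier Ω) / dist x y ^ (2 : ℝ)) *
              (min (infDist x (frontier Ω)) (dist x y)) ^ (-γ) *
              infDist x S ^ (-α)},
        ENNReal.ofReal (infDist x (frontier Ω) * infDist x S ^ (-α)) ≤
      ENNReal.ofReal (C * l ^ (-(((N : ℝ) - α + 1) / ((N : ℝ) - α + γ - 1)))) := by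
  classical
  have hN3 : (3 : ℝ) ≤ (N : ℝ) := by exact_mod_cast hN
  have hκ0 : (0 : ℝ) < (N : ℝ) - α + γ - 1 := by linarith
  have hκne : ((N : ℝ) - α + γ - 1) ≠ 0 := ne_of_gt hκ0
  set βe : ℝ := ((N : ℝ) - α + 1) / ((N : ℝ) - α + γ - 1) with hβe_def
  have hβ0 : (0 : ℝ) < βe := div_pos (by linarith) hκ0
  obtain ⟨K1, hK10, hK1⟩ := aux_radial (by omega : 1 ≤ N) (1 - α) (by linarith)
  have h2β : (0 : ℝ) < (2 : ℝ) ^ βe := Real.rpow_pos_of_pos two_pos _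
  have h1α : ((1 : ℝ) + α) ≠ 0 := by positivity
  -- measurability of the set (for any y, l)
  have hEm : ∀ (y : EuclideanSpace ℝ (Fin N)) (l : ℝ), MeasurableSet
      {x ∈ Ω | x ≠ y ∧ infDist x S ≥ dist x y ∧
        l < dist x y ^ ((2 : ℝ) - N + 2 * α) *
            min (infDist y (frontier Ω))⁻¹ (infDist x (frontier Ω) / dist x y ^ (2 : ℝ)) *
            (min (infDist x (frontier Ω)) (dist x y)) ^ (-γ) *
            infDist x S ^ (-α)} := by
    intro y l
    have m_r : Measurable fun x : EuclideanSpace ℝ (Fin N) => dist x y :=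
      (continuous_id.dist continuous_const).measurable
    have m_dΩ : Measurable fun x : EuclideanSpace ℝ (Fin N) => infDist x (frontier Ω) :=
      (continuous_infDist_pt _).measurable
    have m_dS : Measurable fun x : EuclideanSpace ℝ (Fin N) => infDist x S :=
      (continuous_infDist_pt _).measurable
    have m_F : Measurable fun x : EuclideanSpace ℝ (Fin N) =>
        dist x y ^ ((2 : ℝ) - N + 2 * α) *
          min (infDist y (frontier Ω))⁻¹ (infDist x (frontier Ω) / dist x y ^ (2 : ℝ)) *
          (min (infDist x (frontier Ω)) (dist x y)) ^ (-γ) *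
          infDist x S ^ (-α) :=
      (((m_r.pow measurable_const).mul
        (measurable_const.min (m_dΩ.div (m_r.pow measurable_const)))).mul
        ((m_dΩ.min m_r).pow measurable_const)).mul (m_dS.pow measurable_const)
    have heq : {x ∈ Ω | x ≠ y ∧ infDist x S ≥ dist x y ∧
        l < dist x y ^ ((2 : ℝ) - N + 2 * α) *
            min (infDist y (frontier Ω))⁻¹ (infDist x (frontier Ω) / dist x y ^ (2 : ℝ)) *
            (min (infDist x (frontier Ω)) (dist x y)) ^ (-γ) *
            infDist x S ^ (-α)} =
        Ω ∩ ({x | x ≠ y} ∩ ({x | dist x y ≤ infDist x S} ∩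
          {x | l < dist x y ^ ((2 : ℝ) - N + 2 * α) *
            min (infDist y (frontier Ω))⁻¹ (infDist x (frontier Ω) / dist x y ^ (2 : ℝ)) *
            (min (infDist x (frontier Ω)) (dist x y)) ^ (-γ) *
            infDist x S ^ (-α)})) := by
      ext x
      simp only [Set.mem_sep_iff, Set.mem_inter_iff, Set.mem_setOf_eq, ge_iff_le, and_assoc]
    rw [heq]
    exact hΩo.measurableSet.inter (isOpen_ne.measurableSet.inter
      ((measurableSet_le m_r m_dS).inter (measurableSet_lt measurable_const m_F)))
  -- common ρ facts
  have hρsub : ∀ (y : EuclideanSpace ℝ (Fin N)), y ∈ Ω → ∀ (l : ℝ), 0 < l →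
      {x ∈ Ω | x ≠ y ∧ infDist x S ≥ dist x y ∧
        l < dist x y ^ ((2 : ℝ) - N + 2 * α) *
            min (infDist y (frontier Ω))⁻¹ (infDist x (frontier Ω) / dist x y ^ (2 : ℝ)) *
            (min (infDist x (frontier Ω)) (dist x y)) ^ (-γ) *
            infDist x S ^ (-α)} ⊆
        closedBall y ((2 / l) ^ ((1 : ℝ) / ((N : ℝ) - α + γ - 1))) \ {y} := by
    intro y hy l hl x hx
    obtain ⟨hr0, ha0, hs_a, hs_r, k1, k2, k3⟩ :=
      point_all hN Ω S hΩo hS hSne hγ0 hγ1 hα0 hy hl hx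
    have hxy : x ≠ y := hx.2.1
    have hrκ : dist x y ^ ((N : ℝ) - α + γ - 1) ≤ 2 / l := by
      rw [le_div_iff₀ hl]; nlinarith [k1]
    have hle : dist x y ≤ (2 / l) ^ ((1 : ℝ) / ((N : ℝ) - α + γ - 1)) := by
      have h0 : dist x y = (dist x y ^ ((N : ℝ) - α + γ - 1)) ^
          ((1 : ℝ) / ((N : ℝ) - α + γ - 1)) := by
        rw [← Real.rpow_mul dist_nonneg, mul_one_div, div_self hκne, Real.rpow_one]
      rw [h0]
      exact Real.rpow_le_rpow (Real.rpow_nonneg dist_nonneg _) hrκ (by positivity)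
    exact ⟨mem_closedBall.2 hle, by simpa using hxy⟩
  rcases lt_or_ge α 1 with hα1' | hα1'
  · -- case α < 1
    set μp : ℝ := (1 - α) / (1 + α) with hμp_def
    set σp : ℝ := ((2 : ℝ) - N + 2 * α - γ) * μp with hσp_def
    have hμ0 : 0 ≤ μp := div_nonneg (by linarith) (by linarith)
    have hμ1 : μp ≤ 1 := by rw [hμp_def, div_le_one (by linarith)]; linarith
    have hσN : -(N : ℝ) < σp := by
      rcases le_or_gt 0 ((2 : ℝ) - N + 2 * α - γ) with h | h
      · have : 0 ≤ σp := mul_nonneg h hμ0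
        linarith
      · have h1 : ((2 : ℝ) - N + 2 * α - γ) * 1 ≤ σp := by
          rw [hσp_def]; nlinarith
        linarith
    obtain ⟨K2, hK20, hK2⟩ := aux_radial (by omega : 1 ≤ N) σp hσN
    refine ⟨2 * K1 * 2 ^ βe + K2 * 2 ^ βe, by positivity, fun y hy l hl => ?_⟩
    have h2l : (0 : ℝ) < 2 / l := by positivity
    set ρ : ℝ := (2 / l) ^ ((1 : ℝ) / ((N : ℝ) - α + γ - 1)) with hρ_def
    have hρ : 0 < ρ := Real.rpow_pos_of_pos h2l _
    have hρu : ∀ u : ℝ, ρ ^ u = (2 / l) ^ (u / ((N : ℝ) - α + γ - 1)) := fun u => by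
      rw [hρ_def, ← Real.rpow_mul h2l.le]; congr 1; ring
    have h2lβ : (2 / l) ^ βe = 2 ^ βe * l ^ (-βe) := by
      rw [Real.div_rpow (by norm_num : (0:ℝ) ≤ 2) hl.le, Real.rpow_neg hl.le, div_eq_mul_inv]
    have hpt : ∀ x ∈ {x ∈ Ω | x ≠ y ∧ infDist x S ≥ dist x y ∧
        l < dist x y ^ ((2 : ℝ) - N + 2 * α) *
            min (infDist y (frontier Ω))⁻¹ (infDist x (frontier Ω) / dist x y ^ (2 : ℝ)) *
            (min (infDist x (frontier Ω)) (dist x y)) ^ (-γ) *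
            infDist x S ^ (-α)},
        infDist x (frontier Ω) * infDist x S ^ (-α) ≤
          2 * dist x y ^ (1 - α) + (2 / l) ^ μp * dist x y ^ σp := by
      intro x hx
      obtain ⟨hr0, ha0, hs_a, hs_r, k1, k2, k3⟩ :=
        point_all hN Ω S hΩo hS hSne hγ0 hγ1 hα0 hy hl hx
      rcases le_or_gt (infDist x (frontier Ω)) (2 * dist x y) with hc | hc
      · have hT : 0 ≤ (2 / l) ^ μp * dist x y ^ σp := by positivity
        linarith [k2 hc]
      · have hsa' : infDist x S ^ (-α) ≤ infDist x (frontier Ω) ^ (-α) :=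
          Real.rpow_le_rpow_of_nonpos ha0 hs_a (by linarith)
        have h1 : infDist x (frontier Ω) * infDist x S ^ (-α) ≤
            infDist x (frontier Ω) ^ (1 - α) := by
          calc infDist x (frontier Ω) * infDist x S ^ (-α)
              ≤ infDist x (frontier Ω) * infDist x (frontier Ω) ^ (-α) :=
                mul_le_mul_of_nonneg_left hsa' ha0.le
            _ = infDist x (frontier Ω) ^ (1 - α) := (rpow_one_sub' ha0).symm
        have hk3 := k3 hc
        have h2 : infDist x (frontier Ω) ^ (1 + α) ≤
            2 * dist x y ^ ((2 : ℝ) - N + 2 * α - γ) / l := by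
          rw [le_div_iff₀ hl]; nlinarith
        have h3 : infDist x (frontier Ω) ^ (1 - α) =
            (infDist x (frontier Ω) ^ (1 + α)) ^ μp := by
          rw [show (1 - α) = (1 + α) * μp from by rw [hμp_def]; field_simp,
            Real.rpow_mul ha0.le]
        have h4 : (infDist x (frontier Ω) ^ (1 + α)) ^ μp ≤
            (2 * dist x y ^ ((2 : ℝ) - N + 2 * α - γ) / l) ^ μp :=
          Real.rpow_le_rpow (Real.rpow_nonneg ha0.le _) h2 hμ0
        have h5 : (2 * dist x y ^ ((2 : ℝ) - N + 2 * α - γ) / l) ^ μp =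
            (2 / l) ^ μp * dist x y ^ σp := by
          rw [show 2 * dist x y ^ ((2 : ℝ) - N + 2 * α - γ) / l =
              (2 / l) * dist x y ^ ((2 : ℝ) - N + 2 * α - γ) from by ring,
            Real.mul_rpow h2l.le (Real.rpow_nonneg dist_nonneg _),
            ← Real.rpow_mul dist_nonneg, hσp_def]
        have hfirst : 0 ≤ 2 * dist x y ^ (1 - α) := by positivity
        nlinarith [h1, h3, h4, h5]
    have hbound := glue_bound (hEm y l) (by norm_num : (0:ℝ) ≤ 2)
      (by positivity : (0:ℝ) ≤ (2 / l) ^ μp) hK10.le hK20.le hρ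
      (hρsub y hy l hl) (hK1 y ρ hρ) (hK2 y ρ hρ)
      (fun x => infDist x (frontier Ω) * infDist x S ^ (-α)) hpt
    refine hbound.trans (le_of_eq (congrArg ENNReal.ofReal ?_))
    have hA1 : 2 * (K1 * ρ ^ ((N : ℝ) + (1 - α))) = 2 * K1 * 2 ^ βe * l ^ (-βe) := by
      rw [hρu, show ((N : ℝ) + (1 - α)) / ((N : ℝ) - α + γ - 1) = βe from by
        rw [hβe_def]; ring, h2lβ]; ring
    have hA2 : (2 / l) ^ μp * (K2 * ρ ^ ((N : ℝ) + σp)) = K2 * 2 ^ βe * l ^ (-βe) := by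
      rw [hρu]
      have hsum : (2 / l) ^ μp * (2 / l) ^ (((N : ℝ) + σp) / ((N : ℝ) - α + γ - 1)) =
          (2 / l) ^ βe := by
        rw [← Real.rpow_add h2l]
        congr 1
        rw [hσp_def, hμp_def, hβe_def]
        field_simp
        ring
      calc (2 / l) ^ μp * (K2 * (2 / l) ^ (((N : ℝ) + σp) / ((N : ℝ) - α + γ - 1)))
          = K2 * ((2 / l) ^ μp * (2 / l) ^ (((N : ℝ) + σp) / ((N : ℝ) - α + γ - 1))) := by
            ring
        _ = K2 * (2 / l) ^ βe := by rw [hsum]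
        _ = K2 * 2 ^ βe * l ^ (-βe) := by rw [h2lβ]; ring
    rw [hA1, hA2]; ring
  · -- case 1 ≤ α
    refine ⟨2 * K1 * 2 ^ βe, by positivity, fun y hy l hl => ?_⟩
    have h2l : (0 : ℝ) < 2 / l := by positivity
    set ρ : ℝ := (2 / l) ^ ((1 : ℝ) / ((N : ℝ) - α + γ - 1)) with hρ_def
    have hρ : 0 < ρ := Real.rpow_pos_of_pos h2l _
    have hρu : ∀ u : ℝ, ρ ^ u = (2 / l) ^ (u / ((N : ℝ) - α + γ - 1)) := fun u => by
      rw [hρ_def, ← Real.rpow_mul h2l.le]; congr 1; ring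
    have h2lβ : (2 / l) ^ βe = 2 ^ βe * l ^ (-βe) := by
      rw [Real.div_rpow (by norm_num : (0:ℝ) ≤ 2) hl.le, Real.rpow_neg hl.le, div_eq_mul_inv]
    have hpt : ∀ x ∈ {x ∈ Ω | x ≠ y ∧ infDist x S ≥ dist x y ∧
        l < dist x y ^ ((2 : ℝ) - N + 2 * α) *
            min (infDist y (frontier Ω))⁻¹ (infDist x (frontier Ω) / dist x y ^ (2 : ℝ)) *
            (min (infDist x (frontier Ω)) (dist x y)) ^ (-γ) *
            infDist x S ^ (-α)},
        infDist x (frontier Ω) * infDist x S ^ (-α) ≤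
          2 * dist x y ^ (1 - α) + 0 * dist x y ^ (1 - α) := by
      intro x hx
      obtain ⟨hr0, ha0, hs_a, hs_r, k1, k2, k3⟩ :=
        point_all hN Ω S hΩo hS hSne hγ0 hγ1 hα0 hy hl hx
      rcases le_or_gt (infDist x (frontier Ω)) (2 * dist x y) with hc | hc
      · linarith [k2 hc]
      · have hsa' : infDist x S ^ (-α) ≤ infDist x (frontier Ω) ^ (-α) :=
          Real.rpow_le_rpow_of_nonpos ha0 hs_a (by linarith)
        have h1 : infDist x (frontier Ω) * infDist x S ^ (-α) ≤
            infDist x (frontier Ω) ^ (1 - α) := by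
          calc infDist x (frontier Ω) * infDist x S ^ (-α)
              ≤ infDist x (frontier Ω) * infDist x (frontier Ω) ^ (-α) :=
                mul_le_mul_of_nonneg_left hsa' ha0.le
            _ = infDist x (frontier Ω) ^ (1 - α) := (rpow_one_sub' ha0).symm
        have h2 : infDist x (frontier Ω) ^ (1 - α) ≤ dist x y ^ (1 - α) :=
          Real.rpow_le_rpow_of_nonpos hr0 (by linarith) (by linarith)
        nlinarith [Real.rpow_pos_of_pos hr0 (1 - α)]
    have hbound := glue_bound (hEm y l) (by norm_num : (0:ℝ) ≤ 2)
      (le_refl (0:ℝ)) hK10.le hK10.le hρ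
      (hρsub y hy l hl) (hK1 y ρ hρ) (hK1 y ρ hρ)
      (fun x => infDist x (frontier Ω) * infDist x S ^ (-α)) hpt
    refine hbound.trans (le_of_eq (congrArg ENNReal.ofReal ?_))
    have hA1 : 2 * (K1 * ρ ^ ((N : ℝ) + (1 - α))) = 2 * K1 * 2 ^ βe * l ^ (-βe) := by
      rw [hρu, show ((N : ℝ) + (1 - α)) / ((N : ℝ) - α + γ - 1) = βe from by
        rw [hβe_def]; ring, h2lβ]; ring
    rw [hA1]; ring
end

section
/- Let γ ∈ [0,1] and 0 < α < N + γ − 1, and define for x ∈ Ω and ξ ∈ ∂Ω the kernel F(x,ξ) := d(x)^{1−γ} d_Σ(x)^{−α} |x−ξ|^{−(N−2α)}. Then there exists a constant C > 0, depending only on N, α and γ, such that for every ξ ∈ ∂Ω and every λ > 0, ∫_{{x ∈ Ω : d_Σ(x) > |x−ξ| and F(x,ξ) > λ}} d(x) d_Σ(x)^{−α} dx ≤ C λ^{−(N−α+1)/(N−α+γ−1)}. -/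
open MeasureTheory Set Metric
open scoped ENNReal

lemma ball_rpow_lintegral_le {N : ℕ} (hN : 0 < N) (p : ℝ) (hp : 0 < (N : ℝ) + p) :
    ∃ K > 0, ∀ (ξ : EuclideanSpace ℝ (Fin N)) (R : ℝ), 0 < R →
      ∫⁻ x in ball ξ R, ENNReal.ofReal (dist x ξ ^ p) ≤
        ENNReal.ofReal (K * R ^ ((N : ℝ) + p)) := by
  haveI : NeZero N := ⟨hN.ne'⟩
  set q : ℝ := (N : ℝ) + p with hq
  set V : ℝ≥0∞ := volume (ball (0 : EuclideanSpace ℝ (Fin N)) 1) with hV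
  have hV0 : 0 < V := measure_ball_pos _ _ one_pos
  have hVt : V ≠ ∞ := measure_ball_lt_top.ne
  set ρ : ℝ≥0∞ := ENNReal.ofReal ((2 : ℝ)⁻¹ ^ q) with hρ
  have hρ1 : ρ < 1 := by
    rw [hρ, ENNReal.ofReal_lt_one]
    exact Real.rpow_lt_one (by norm_num) (by norm_num) hp
  set c : ℝ≥0∞ := ENNReal.ofReal ((2 : ℝ) ^ |p|) * V with hc
  set D : ℝ≥0∞ := c * (1 - ρ)⁻¹ with hD
  have hc0 : 0 < c := by
    apply ENNReal.mul_pos _ hV0.ne'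
    simp only [ne_eq, ENNReal.ofReal_eq_zero, not_le]
    positivity
  have hct : c ≠ ∞ := ENNReal.mul_ne_top ENNReal.ofReal_ne_top hVt
  have hDt : D ≠ ∞ := by
    apply ENNReal.mul_ne_top hct
    exact ENNReal.inv_ne_top.2 (tsub_pos_of_lt hρ1).ne'
  have hD0 : 0 < D := ENNReal.mul_pos hc0.ne' (by simp)
  refine ⟨D.toReal, ENNReal.toReal_pos hD0.ne' hDt, ?_⟩
  intro ξ R hR
  set u : ℕ → ℝ := fun k => R * (2 : ℝ)⁻¹ ^ k with hu
  have hu0 : ∀ k, 0 < u k := fun k => by positivity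
  have husucc : ∀ k, u (k + 1) = u k * 2⁻¹ := fun k => by
    simp only [hu, pow_succ]; ring
  set A : ℕ → Set (EuclideanSpace ℝ (Fin N)) := fun k => ball ξ (u k) \ ball ξ (u (k + 1))
    with hA
  -- covering
  have hcov : ball ξ R ⊆ {ξ} ∪ ⋃ k, A k := by
    intro x hx
    rcases eq_or_ne x ξ with h | h
    · exact Or.inl h
    · right
      have ht0 : 0 < dist x ξ := dist_pos.2 h
      have htR : dist x ξ < R := mem_ball.1 hx
      have hex : ∃ n, u (n + 1) ≤ dist x ξ := by
        obtain ⟨n, hn⟩ := exists_pow_lt_of_lt_one (div_pos ht0 hR)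
          (by norm_num : (2 : ℝ)⁻¹ < 1)
        refine ⟨n, ?_⟩
        have h1 : u n < dist x ξ := by
          have := mul_lt_mul_of_pos_left hn hR
          rwa [mul_div_cancel₀ _ hR.ne'] at this
        have h2 : u (n + 1) ≤ u n := by
          rw [husucc]; nlinarith [hu0 n]
        exact h2.trans h1.le
      have hk1 : u (Nat.find hex + 1) ≤ dist x ξ := Nat.find_spec hex
      have hk2 : dist x ξ < u (Nat.find hex) := by
        rcases Nat.eq_zero_or_pos (Nat.find hex) with h0 | h0
        · rw [h0]; simpa [hu] using htR
        · obtain ⟨m, hm⟩ := Nat.exists_eq_succ_of_ne_zero h0.ne'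
          rw [hm]
          have := Nat.find_min hex (hm ▸ Nat.lt_succ_self m)
          exact lt_of_not_ge this
      exact mem_iUnion.2 ⟨Nat.find hex, mem_ball.2 hk2,
        fun hc => absurd (mem_ball.1 hc) (not_lt.2 hk1)⟩
  -- per annulus bound
  have hterm : ∀ k, ∫⁻ x in A k, ENNReal.ofReal (dist x ξ ^ p) ≤
      c * ENNReal.ofReal (R ^ q) * ρ ^ k := by
    intro k
    have hptwise : ∀ x ∈ A k, ENNReal.ofReal (dist x ξ ^ p) ≤
        ENNReal.ofReal ((2 : ℝ) ^ |p| * u k ^ p) := by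
      intro x hx
      apply ENNReal.ofReal_le_ofReal
      have h2 : dist x ξ < u k := mem_ball.1 hx.1
      have h1 : u (k + 1) ≤ dist x ξ := not_lt.1 fun hlt => hx.2 (mem_ball.2 hlt)
      rcases le_or_gt 0 p with hp0 | hp0
      · have hb : dist x ξ ^ p ≤ u k ^ p := Real.rpow_le_rpow dist_nonneg h2.le hp0
        have hone : (1 : ℝ) ≤ (2 : ℝ) ^ |p| := by
          have := Real.rpow_le_rpow_of_exponent_le (one_le_two) (abs_nonneg p)
          rwa [Real.rpow_zero] at this
        calc dist x ξ ^ p ≤ u k ^ p := hb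
          _ ≤ (2 : ℝ) ^ |p| * u k ^ p :=
            le_mul_of_one_le_left (Real.rpow_nonneg (hu0 k).le p) hone
      · have hb : dist x ξ ^ p ≤ u (k + 1) ^ p :=
          Real.rpow_le_rpow_of_nonpos (hu0 (k + 1)) h1 hp0.le
        have : u (k + 1) ^ p = (2 : ℝ) ^ |p| * u k ^ p := by
          rw [husucc, Real.mul_rpow (hu0 k).le (by norm_num),
            Real.inv_rpow (by norm_num : (0:ℝ) ≤ 2), ← Real.rpow_neg (by norm_num : (0:ℝ) ≤ 2),
            abs_of_neg hp0]
          ring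
        rw [this] at hb; exact hb
    have hAm : MeasurableSet (A k) := measurableSet_ball.diff measurableSet_ball
    calc ∫⁻ x in A k, ENNReal.ofReal (dist x ξ ^ p)
        ≤ ∫⁻ _ in A k, ENNReal.ofReal ((2 : ℝ) ^ |p| * u k ^ p) :=
          setLIntegral_mono' hAm hptwise
      _ = ENNReal.ofReal ((2 : ℝ) ^ |p| * u k ^ p) * volume (A k) := setLIntegral_const _ _
      _ ≤ ENNReal.ofReal ((2 : ℝ) ^ |p| * u k ^ p) * volume (ball ξ (u k)) :=
          mul_le_mul_right (measure_mono diff_subset) _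
      _ = c * ENNReal.ofReal (R ^ q) * ρ ^ k := by
          rw [Measure.addHaar_ball _ _ (hu0 k).le, finrank_euclideanSpace_fin]
          have hs : (0:ℝ) ≤ (2:ℝ)⁻¹ ^ q := by positivity
          have e0 : u k ^ p * u k ^ ((N:ℕ) : ℝ) = R ^ q * ((2:ℝ)⁻¹ ^ q) ^ k := by
            rw [← Real.rpow_add (hu0 k)]
            simp only [hu]
            rw [Real.mul_rpow hR.le (by positivity), ← Real.rpow_natCast ((2:ℝ)⁻¹) k,
              ← Real.rpow_natCast ((2:ℝ)⁻¹ ^ q) k, ← Real.rpow_mul (by norm_num : (0:ℝ) ≤ 2⁻¹),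
              ← Real.rpow_mul (by norm_num : (0:ℝ) ≤ 2⁻¹), hq, add_comm p ((N:ℝ)),
              mul_comm ((k:ℝ)) (((N:ℝ)) + p)]
          have key : ENNReal.ofReal ((2:ℝ) ^ |p| * u k ^ p) * (ENNReal.ofReal (u k ^ (N:ℕ)) * volume (ball (0 : EuclideanSpace ℝ (Fin N)) 1))
              = ENNReal.ofReal ((2:ℝ) ^ |p| * u k ^ p * u k ^ (N:ℕ)) * volume (ball (0 : EuclideanSpace ℝ (Fin N)) 1) := by
            rw [← mul_assoc, ← ENNReal.ofReal_mul (by positivity)]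
          have e1 : (2:ℝ) ^ |p| * u k ^ p * u k ^ (N:ℕ) = 2 ^ |p| * (R ^ q * ((2:ℝ)⁻¹ ^ q) ^ k) := by
            rw [← Real.rpow_natCast (u k) N, mul_assoc, e0]
          rw [key, e1, ENNReal.ofReal_mul (by positivity), ENNReal.ofReal_mul (by positivity),
            ENNReal.ofReal_pow hs, hc, hρ, hV]
          ring
  calc ∫⁻ x in ball ξ R, ENNReal.ofReal (dist x ξ ^ p)
      ≤ ∫⁻ x in {ξ} ∪ ⋃ k, A k, ENNReal.ofReal (dist x ξ ^ p) := lintegral_mono_set hcov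
    _ ≤ (∫⁻ x in {ξ}, ENNReal.ofReal (dist x ξ ^ p)) +
        ∫⁻ x in ⋃ k, A k, ENNReal.ofReal (dist x ξ ^ p) := lintegral_union_le _ _ _
    _ = ∫⁻ x in ⋃ k, A k, ENNReal.ofReal (dist x ξ ^ p) := by
        rw [setLIntegral_measure_zero _ _ (measure_singleton ξ), zero_add]
    _ ≤ ∑' k, ∫⁻ x in A k, ENNReal.ofReal (dist x ξ ^ p) := lintegral_iUnion_le _ _
    _ ≤ ∑' k, c * ENNReal.ofReal (R ^ q) * ρ ^ k := ENNReal.tsum_le_tsum hterm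
    _ = c * ENNReal.ofReal (R ^ q) * (1 - ρ)⁻¹ := by
        rw [ENNReal.tsum_mul_left, ENNReal.tsum_geometric]
    _ = ENNReal.ofReal (D.toReal * R ^ q) := by
        rw [ENNReal.ofReal_mul ENNReal.toReal_nonneg, ENNReal.ofReal_toReal hDt, hD]
        ring

/-- Level-set estimate for the Martin-type kernel
`F(x,ξ) = d(x)^{1−γ} d_Σ(x)^{−α} |x−ξ|^{−(N−2α)}` on the region `d_Σ(x) > |x−ξ|`. -/
theorem stmt_5 {N : ℕ} (hN : 3 ≤ N) (Ω S : Set (EuclideanSpace ℝ (Fin N)))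
    (hΩo : IsOpen Ω) (hΩb : Bornology.IsBounded Ω)
    (hS : S ⊆ frontier Ω) (hSne : S.Nonempty) (hSc : IsCompact S)
    (γ α : ℝ) (hγ0 : 0 ≤ γ) (hγ1 : γ ≤ 1) (hα0 : 0 < α) (hα1 : α < (N : ℝ) + γ - 1) :
    ∃ C > 0, ∀ ξ ∈ frontier Ω, ∀ l : ℝ, 0 < l →
      ∫⁻ x in {x ∈ Ω | infDist x S > dist x ξ ∧
          l < infDist x (frontier Ω) ^ (1 - γ) * infDist x S ^ (-α) *
              dist x ξ ^ (-((N : ℝ) - 2 * α))},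
        ENNReal.ofReal (infDist x (frontier Ω) * infDist x S ^ (-α)) ≤
      ENNReal.ofReal (C * l ^ (-(((N : ℝ) - α + 1) / ((N : ℝ) - α + γ - 1)))) := by
  have hN0 : 0 < N := by omega
  have hNR : (3 : ℝ) ≤ (N : ℝ) := by exact_mod_cast hN
  have hβ : 0 < (N : ℝ) - α + γ - 1 := by linarith
  have hq : 0 < (N : ℝ) + (1 - α) := by linarith
  obtain ⟨K, hK, hKb⟩ := ball_rpow_lintegral_le hN0 (1 - α) hq
  refine ⟨K, hK, ?_⟩
  intro ξ hξ l hl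
  set β : ℝ := (N : ℝ) - α + γ - 1 with hβdef
  set R : ℝ := l ^ (-β⁻¹) with hRdef
  have hR0 : 0 < R := Real.rpow_pos_of_pos hl _
  have hξΩ : ξ ∉ Ω := by
    rw [hΩo.frontier_eq] at hξ; exact hξ.2
  -- subset of the ball
  have hsub : {x ∈ Ω | infDist x S > dist x ξ ∧
      l < infDist x (frontier Ω) ^ (1 - γ) * infDist x S ^ (-α) *
          dist x ξ ^ (-((N : ℝ) - 2 * α))} ⊆ ball ξ R := by
    rintro x ⟨hxΩ, hxd, hxl⟩
    have hxne : x ≠ ξ := fun h => hξΩ (h ▸ hxΩ)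
    have hr : 0 < dist x ξ := dist_pos.2 hxne
    have hd0 : (0 : ℝ) ≤ infDist x (frontier Ω) := infDist_nonneg
    have hdr : infDist x (frontier Ω) ≤ dist x ξ := infDist_le_dist_of_mem hξ
    have h1 : infDist x (frontier Ω) ^ (1 - γ) ≤ dist x ξ ^ (1 - γ) :=
      Real.rpow_le_rpow hd0 hdr (by linarith)
    have h2 : infDist x S ^ (-α) ≤ dist x ξ ^ (-α) :=
      Real.rpow_le_rpow_of_nonpos hr hxd.le (by linarith)
    have key : l < dist x ξ ^ (-β) := by
      refine hxl.trans_le ?_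
      have h3 : infDist x (frontier Ω) ^ (1 - γ) * infDist x S ^ (-α) *
            dist x ξ ^ (-((N : ℝ) - 2 * α)) ≤
          dist x ξ ^ (1 - γ) * dist x ξ ^ (-α) * dist x ξ ^ (-((N : ℝ) - 2 * α)) := by
        apply mul_le_mul_of_nonneg_right _ (Real.rpow_nonneg dist_nonneg _)
        exact mul_le_mul h1 h2 (Real.rpow_nonneg infDist_nonneg _)
          (Real.rpow_nonneg dist_nonneg _)
      refine h3.trans_eq ?_
      rw [← Real.rpow_add hr, ← Real.rpow_add hr, hβdef]
      congr 1
      ring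
    have hrR : dist x ξ < R := by
      have h4 := Real.rpow_lt_rpow_of_neg hl key (by simp [hβ, hβ.le] : -β⁻¹ < 0)
      rwa [← Real.rpow_mul hr.le, neg_mul_neg, mul_inv_cancel₀ hβ.ne', Real.rpow_one,
        ← hRdef] at h4
    exact mem_ball.2 hrR
  have hmeas : Measurable fun x : EuclideanSpace ℝ (Fin N) =>
      ENNReal.ofReal (dist x ξ ^ (1 - α)) :=
    by measurability
  calc ∫⁻ x in {x ∈ Ω | infDist x S > dist x ξ ∧
          l < infDist x (frontier Ω) ^ (1 - γ) * infDist x S ^ (-α) *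
              dist x ξ ^ (-((N : ℝ) - 2 * α))},
        ENNReal.ofReal (infDist x (frontier Ω) * infDist x S ^ (-α))
      ≤ ∫⁻ x in {x ∈ Ω | infDist x S > dist x ξ ∧
          l < infDist x (frontier Ω) ^ (1 - γ) * infDist x S ^ (-α) *
              dist x ξ ^ (-((N : ℝ) - 2 * α))},
          ENNReal.ofReal (dist x ξ ^ (1 - α)) := by
        refine setLIntegral_mono hmeas ?_
        rintro x ⟨hxΩ, hxd, hxl⟩
        apply ENNReal.ofReal_le_ofReal
        have hxne : x ≠ ξ := fun h => hξΩ (h ▸ hxΩ)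
        have hr : 0 < dist x ξ := dist_pos.2 hxne
        have hdr : infDist x (frontier Ω) ≤ dist x ξ := infDist_le_dist_of_mem hξ
        have h2 : infDist x S ^ (-α) ≤ dist x ξ ^ (-α) :=
          Real.rpow_le_rpow_of_nonpos hr hxd.le (by linarith)
        calc infDist x (frontier Ω) * infDist x S ^ (-α)
            ≤ dist x ξ * dist x ξ ^ (-α) :=
              mul_le_mul hdr h2 (Real.rpow_nonneg infDist_nonneg _) dist_nonneg
          _ = dist x ξ ^ (1 - α) := by
              rw [sub_eq_add_neg, Real.rpow_add hr, Real.rpow_one]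
    _ ≤ ∫⁻ x in ball ξ R, ENNReal.ofReal (dist x ξ ^ (1 - α)) := lintegral_mono_set hsub
    _ ≤ ENNReal.ofReal (K * R ^ ((N : ℝ) + (1 - α))) := hKb ξ R hR0
    _ = ENNReal.ofReal (K * l ^ (-(((N : ℝ) - α + 1) / ((N : ℝ) - α + γ - 1)))) := by
        congr 2
        rw [hRdef, ← Real.rpow_mul hl.le]
        congr 1
        rw [hβdef]
        field_simp
        ring
end

section
/- Let α ≤ N and 0 < σ < N. Then there exists a constant C > 0, depending only on Ω, Σ, α and σ, such that for all pairwise distinct points x, y, z ∈ cl(Ω) one has 𝒩_{α,σ}(x,y)^{−1} ≤ C ( 𝒩_{α,σ}(x,z)^{−1} + 𝒩_{α,σ}(z,y)^{−1} ). -/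
open MeasureTheory Set Metric

/-- The kernel `𝒩_{α,σ}(x,y) = max{|x−y|, d_Σ(x), d_Σ(y)}^α /
(|x−y|^{N−σ} · max{|x−y|, d(x), d(y)}^σ)`, where `d` is the distance to `∂Ω`
and `d_Σ` the distance to `S`. -/
noncomputable def NKernel (N : ℕ) (α σ : ℝ) (Ω S : Set (EuclideanSpace ℝ (Fin N)))
    (x y : EuclideanSpace ℝ (Fin N)) : ℝ :=
  (max (dist x y) (max (infDist x S) (infDist y S))) ^ α /
    (dist x y ^ ((N : ℝ) - σ) *
      (max (dist x y) (max (infDist x (frontier Ω)) (infDist y (frontier Ω)))) ^ σ)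

open Real in
lemma aux_key {N : ℕ} {α σ : ℝ} (hα : α ≤ N) (hσ0 : 0 < σ) (hσN : σ < N)
    {a a' b b' c c' : ℝ} (ha : 0 < a) (ha' : 0 < a')
    (hab : a ≤ b) (hac : a ≤ c) (ha'b' : a' ≤ b')
    (hbc : b ≤ c)
    (haa' : a ≤ 2 * a') (hbb' : b ≤ 2 * b') (hcc' : c ≤ 2 * c')
    (hc'ac : c' ≤ 2 * max a' c) :
    a ^ ((N : ℝ) - σ) * b ^ σ / c ^ α ≤
      2 ^ ((N : ℝ) + |α|) * (a' ^ ((N : ℝ) - σ) * b' ^ σ / c' ^ α) := by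
  have hb : 0 < b := lt_of_lt_of_le ha hab
  have hc : 0 < c := lt_of_lt_of_le ha hac
  have hb' : 0 < b' := lt_of_lt_of_le ha' ha'b'
  have hc' : 0 < c' := by nlinarith [hac.trans hcc']
  have hNσ : (0:ℝ) ≤ (N : ℝ) - σ := by linarith
  have hcα : (0:ℝ) < c ^ α := rpow_pos_of_pos hc α
  have hc'α : (0:ℝ) < c' ^ α := rpow_pos_of_pos hc' α
  rw [mul_div_assoc', div_le_div_iff₀ hcα hc'α]
  have h1 : a ^ ((N:ℝ) - σ) ≤ 2 ^ ((N:ℝ) - σ) * a' ^ ((N:ℝ) - σ) := by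
    rw [← mul_rpow (by norm_num) ha'.le]
    exact rpow_le_rpow ha.le haa' hNσ
  have h2 : b ^ σ ≤ 2 ^ σ * b' ^ σ := by
    rw [← mul_rpow (by norm_num) hb'.le]
    exact rpow_le_rpow hb.le hbb' hσ0.le
  have h2pow : (2:ℝ) ^ ((N:ℝ) - σ) * 2 ^ σ * 2 ^ |α| = 2 ^ ((N:ℝ) + |α|) := by
    rw [← rpow_add two_pos, ← rpow_add two_pos,
      show (N:ℝ) - σ + σ + |α| = (N:ℝ) + |α| by ring]
  have easy : c' ^ α ≤ 2 ^ |α| * c ^ α →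
      a ^ ((N:ℝ) - σ) * b ^ σ * c' ^ α ≤
        2 ^ ((N:ℝ) + |α|) * (a' ^ ((N:ℝ) - σ) * b' ^ σ) * c ^ α := by
    intro h3
    calc a ^ ((N:ℝ) - σ) * b ^ σ * c' ^ α
        ≤ (2 ^ ((N:ℝ) - σ) * a' ^ ((N:ℝ) - σ)) * (2 ^ σ * b' ^ σ) * (2 ^ |α| * c ^ α) := by
          gcongr <;> positivity
      _ = (2 ^ ((N:ℝ) - σ) * 2 ^ σ * 2 ^ |α|) * (a' ^ ((N:ℝ) - σ) * b' ^ σ) * c ^ α := by ring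
      _ = 2 ^ ((N:ℝ) + |α|) * (a' ^ ((N:ℝ) - σ) * b' ^ σ) * c ^ α := by rw [h2pow]
  rcases lt_or_ge α 0 with hneg | hα0
  · refine easy ?_
    have hh : c / 2 ≤ c' := by linarith
    have h4 : c' ^ α ≤ (c / 2) ^ α :=
      rpow_le_rpow_of_nonpos (by positivity) hh hneg.le
    have h5 : ((c / 2 : ℝ)) ^ α = 2 ^ |α| * c ^ α := by
      rw [abs_of_neg hneg, div_rpow hc.le (by norm_num : (0:ℝ) ≤ 2),
        rpow_neg (by norm_num : (0:ℝ) ≤ 2)]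
      field_simp
    linarith [h4, h5.le]
  · rcases le_total a' c with hle | hca'
    · refine easy ?_
      have hmax : max a' c = c := max_eq_right hle
      have hc2 : c' ≤ 2 * c := by rw [hmax] at hc'ac; exact hc'ac
      have : c' ^ α ≤ (2 * c) ^ α := rpow_le_rpow hc'.le hc2 hα0
      rw [mul_rpow (by norm_num) hc.le] at this
      rwa [abs_of_nonneg hα0]
    · -- hard case : c ≤ a', 0 ≤ α
      have hmax : max a' c = a' := max_eq_left hca'
      have hc2 : c' ≤ 2 * a' := by rw [hmax] at hc'ac; exact hc'ac
      have h3 : c' ^ α ≤ 2 ^ α * a' ^ α := by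
        have : c' ^ α ≤ (2 * a') ^ α := rpow_le_rpow hc'.le hc2 hα0
        rwa [mul_rpow (by norm_num) ha'.le] at this
      have e1 : a' ^ (α - (N:ℝ)) ≤ c ^ (α - (N:ℝ)) :=
        rpow_le_rpow_of_nonpos hc hca' (by linarith)
      have h5 : a' ^ α ≤ a' ^ (N:ℝ) * c ^ (α - (N:ℝ)) := by
        calc a' ^ α = a' ^ (N:ℝ) * a' ^ (α - (N:ℝ)) := by
              rw [← rpow_add ha', show (N:ℝ) + (α - (N:ℝ)) = α by ring]
          _ ≤ a' ^ (N:ℝ) * c ^ (α - (N:ℝ)) := by gcongr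
      have key : a ^ ((N:ℝ) - σ) * b ^ σ * a' ^ (N:ℝ) ≤
          a' ^ ((N:ℝ) - σ) * b' ^ σ * c ^ (N:ℝ) := by
        have ea' : a' ^ (N:ℝ) = a' ^ ((N:ℝ) - σ) * a' ^ σ := by
          rw [← rpow_add ha', show (N:ℝ) - σ + σ = (N:ℝ) by ring]
        have ec : c ^ (N:ℝ) = c ^ ((N:ℝ) - σ) * c ^ σ := by
          rw [← rpow_add hc, show (N:ℝ) - σ + σ = (N:ℝ) by ring]
        have k1 : a ^ ((N:ℝ) - σ) ≤ c ^ ((N:ℝ) - σ) := rpow_le_rpow ha.le hac hNσ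
        have k2 : b ^ σ ≤ c ^ σ := rpow_le_rpow hb.le hbc hσ0.le
        have k3 : a' ^ σ ≤ b' ^ σ := rpow_le_rpow ha'.le ha'b' hσ0.le
        rw [ea', ec]
        calc a ^ ((N:ℝ) - σ) * b ^ σ * (a' ^ ((N:ℝ) - σ) * a' ^ σ)
            = a ^ ((N:ℝ) - σ) * b ^ σ * a' ^ σ * a' ^ ((N:ℝ) - σ) := by ring
          _ ≤ c ^ ((N:ℝ) - σ) * c ^ σ * b' ^ σ * a' ^ ((N:ℝ) - σ) := by
              gcongr <;> positivity
          _ = a' ^ ((N:ℝ) - σ) * b' ^ σ * (c ^ ((N:ℝ) - σ) * c ^ σ) := by ring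
      have h2α : (2:ℝ) ^ α ≤ 2 ^ ((N:ℝ) + |α|) :=
        rpow_le_rpow_of_exponent_le one_le_two
          (by have := le_abs_self α; have : (0:ℝ) ≤ (N:ℝ) := Nat.cast_nonneg N; linarith [le_abs_self α])
      calc a ^ ((N:ℝ) - σ) * b ^ σ * c' ^ α
          ≤ a ^ ((N:ℝ) - σ) * b ^ σ * (2 ^ α * (a' ^ (N:ℝ) * c ^ (α - (N:ℝ)))) := by
            have h6 : c' ^ α ≤ 2 ^ α * (a' ^ (N:ℝ) * c ^ (α - (N:ℝ))) :=
              h3.trans (mul_le_mul_of_nonneg_left h5 (by positivity))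
            exact mul_le_mul_of_nonneg_left h6 (by positivity)
        _ = 2 ^ α * (a ^ ((N:ℝ) - σ) * b ^ σ * a' ^ (N:ℝ)) * c ^ (α - (N:ℝ)) := by ring
        _ ≤ 2 ^ α * (a' ^ ((N:ℝ) - σ) * b' ^ σ * c ^ (N:ℝ)) * c ^ (α - (N:ℝ)) := by
            gcongr <;> positivity
        _ = 2 ^ α * (a' ^ ((N:ℝ) - σ) * b' ^ σ) * (c ^ (N:ℝ) * c ^ (α - (N:ℝ))) := by ring
        _ = 2 ^ α * (a' ^ ((N:ℝ) - σ) * b' ^ σ) * c ^ α := by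
            rw [← rpow_add hc, show (N:ℝ) + (α - (N:ℝ)) = α by ring]
        _ ≤ 2 ^ ((N:ℝ) + |α|) * (a' ^ ((N:ℝ) - σ) * b' ^ σ) * c ^ α := by
            gcongr <;> positivity

open Metric in
lemma NKernel_symm (N : ℕ) (α σ : ℝ) (Ω S : Set (EuclideanSpace ℝ (Fin N)))
    (x y : EuclideanSpace ℝ (Fin N)) :
    NKernel N α σ Ω S x y = NKernel N α σ Ω S y x := by
  unfold NKernel
  rw [dist_comm x y, max_comm (infDist x S) (infDist y S),
    max_comm (infDist x (frontier Ω)) (infDist y (frontier Ω))]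

open Metric in
lemma NKernel_inv_le {N : ℕ} (Ω S : Set (EuclideanSpace ℝ (Fin N)))
    (hS : S ⊆ frontier Ω) (hSne : S.Nonempty)
    {α σ : ℝ} (hα : α ≤ N) (hσ0 : 0 < σ) (hσN : σ < N)
    {x y z : EuclideanSpace ℝ (Fin N)} (hxy : x ≠ y) (hxz : x ≠ z)
    (hzy : dist z y ≤ dist x z) :
    (NKernel N α σ Ω S x y)⁻¹ ≤
      2 ^ ((N : ℝ) + |α|) * (NKernel N α σ Ω S x z)⁻¹ := by
  have ha : 0 < dist x y := dist_pos.2 hxy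
  have ha' : 0 < dist x z := dist_pos.2 hxz
  have hdx : infDist x (frontier Ω) ≤ infDist x S := infDist_le_infDist_of_subset hS hSne
  have hdy : infDist y (frontier Ω) ≤ infDist y S := infDist_le_infDist_of_subset hS hSne
  have haa' : dist x y ≤ 2 * dist x z := by
    have := dist_triangle x z y; linarith
  have hyzF : infDist y (frontier Ω) ≤ infDist z (frontier Ω) + dist x z := by
    have h := infDist_le_infDist_add_dist (x := y) (y := z) (s := frontier Ω)
    rw [dist_comm y z] at h; linarith
  have hyzS : infDist y S ≤ infDist z S + dist x z := by
    have h := infDist_le_infDist_add_dist (x := y) (y := z) (s := S)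
    rw [dist_comm y z] at h; linarith
  have hzxS : infDist z S ≤ infDist x S + dist x z := by
    have h := infDist_le_infDist_add_dist (x := z) (y := x) (s := S)
    rw [dist_comm z x] at h; linarith
  have hab : dist x y ≤ max (dist x y) (max (infDist x (frontier Ω)) (infDist y (frontier Ω))) :=
    le_max_left _ _
  have hac : dist x y ≤ max (dist x y) (max (infDist x S) (infDist y S)) := le_max_left _ _
  have ha'b' : dist x z ≤ max (dist x z) (max (infDist x (frontier Ω)) (infDist z (frontier Ω))) :=
    le_max_left _ _
  have hbc : max (dist x y) (max (infDist x (frontier Ω)) (infDist y (frontier Ω))) ≤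
      max (dist x y) (max (infDist x S) (infDist y S)) :=
    max_le_max le_rfl (max_le_max hdx hdy)
  have hxF : infDist x (frontier Ω) ≤
      max (dist x z) (max (infDist x (frontier Ω)) (infDist z (frontier Ω))) :=
    le_trans (le_max_left _ _) (le_max_right _ _)
  have hzF : infDist z (frontier Ω) ≤
      max (dist x z) (max (infDist x (frontier Ω)) (infDist z (frontier Ω))) :=
    le_trans (le_max_right _ _) (le_max_right _ _)
  have hxS : infDist x S ≤ max (dist x z) (max (infDist x S) (infDist z S)) :=
    le_trans (le_max_left _ _) (le_max_right _ _)
  have hzS : infDist z S ≤ max (dist x z) (max (infDist x S) (infDist z S)) :=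
    le_trans (le_max_right _ _) (le_max_right _ _)
  have ha'c' : dist x z ≤ max (dist x z) (max (infDist x S) (infDist z S)) := le_max_left _ _
  have hbb' : max (dist x y) (max (infDist x (frontier Ω)) (infDist y (frontier Ω))) ≤
      2 * max (dist x z) (max (infDist x (frontier Ω)) (infDist z (frontier Ω))) := by
    refine max_le (by linarith) (max_le (by linarith [infDist_nonneg (s := frontier Ω) (x := x)]) ?_)
    linarith
  have hcc' : max (dist x y) (max (infDist x S) (infDist y S)) ≤
      2 * max (dist x z) (max (infDist x S) (infDist z S)) := by
    refine max_le (by linarith) (max_le (by linarith [infDist_nonneg (s := S) (x := x)]) ?_)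
    linarith
  have hc'ac : max (dist x z) (max (infDist x S) (infDist z S)) ≤
      2 * max (dist x z) (max (dist x y) (max (infDist x S) (infDist y S))) := by
    have hxSc : infDist x S ≤ max (dist x y) (max (infDist x S) (infDist y S)) :=
      le_trans (le_max_left _ _) (le_max_right _ _)
    have hm1 : dist x z ≤ max (dist x z) (max (dist x y) (max (infDist x S) (infDist y S))) :=
      le_max_left _ _
    have hm2 : max (dist x y) (max (infDist x S) (infDist y S)) ≤
        max (dist x z) (max (dist x y) (max (infDist x S) (infDist y S))) := le_max_right _ _
    refine max_le (by linarith) (max_le (by linarith) (by linarith))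
  have key := aux_key (N := N) hα hσ0 hσN ha ha' hab hac ha'b' hbc haa' hbb' hcc' hc'ac
  have e1 : (NKernel N α σ Ω S x y)⁻¹ =
      dist x y ^ ((N:ℝ) - σ) *
        (max (dist x y) (max (infDist x (frontier Ω)) (infDist y (frontier Ω)))) ^ σ /
        (max (dist x y) (max (infDist x S) (infDist y S))) ^ α := by
    rw [NKernel, inv_div]
  have e2 : (NKernel N α σ Ω S x z)⁻¹ =
      dist x z ^ ((N:ℝ) - σ) *
        (max (dist x z) (max (infDist x (frontier Ω)) (infDist z (frontier Ω)))) ^ σ /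
        (max (dist x z) (max (infDist x S) (infDist z S))) ^ α := by
    rw [NKernel, inv_div]
  rw [e1, e2]
  exact key

/-- `𝒩_{α,σ}⁻¹` satisfies a quasi-metric inequality on `cl(Ω)`. -/
theorem stmt_6 {N : ℕ} (hN : 3 ≤ N) (Ω S : Set (EuclideanSpace ℝ (Fin N)))
    (hΩo : IsOpen Ω) (hΩb : Bornology.IsBounded Ω)
    (hS : S ⊆ frontier Ω) (hSne : S.Nonempty) (hSc : IsCompact S)
    (α σ : ℝ) (hα : α ≤ N) (hσ0 : 0 < σ) (hσN : σ < N) :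
    ∃ C > 0, ∀ x ∈ closure Ω, ∀ y ∈ closure Ω, ∀ z ∈ closure Ω,
      x ≠ y → x ≠ z → y ≠ z →
      (NKernel N α σ Ω S x y)⁻¹ ≤
        C * ((NKernel N α σ Ω S x z)⁻¹ + (NKernel N α σ Ω S z y)⁻¹) := by
  refine ⟨2 ^ ((N : ℝ) + |α|), Real.rpow_pos_of_pos two_pos _, ?_⟩
  intro x _ y _ z _ hxy hxz hyz
  have hC : (0:ℝ) ≤ 2 ^ ((N : ℝ) + |α|) := (Real.rpow_pos_of_pos two_pos _).le
  have hnn : ∀ u v : EuclideanSpace ℝ (Fin N), 0 ≤ (NKernel N α σ Ω S u v)⁻¹ := by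
    intro u v
    rw [NKernel]
    positivity
  rw [mul_add]
  rcases le_total (dist z y) (dist x z) with h | h
  · have hkey := NKernel_inv_le Ω S hS hSne hα hσ0 hσN hxy hxz h
    have h0 := hnn z y
    nlinarith [mul_nonneg hC h0]
  · have h' : dist z x ≤ dist y z := by
      rw [dist_comm z x, dist_comm y z]; exact h
    have hkey := NKernel_inv_le Ω S hS hSne hα hσ0 hσN hxy.symm hyz h'
    rw [NKernel_symm N α σ Ω S y x, NKernel_symm N α σ Ω S y z] at hkey
    have h0 := hnn x z
    nlinarith [mul_nonneg hC h0]
end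

section
/- Let α < N and 0 < σ < N. Then there exist constants C₁, C₂ > 0 depending only on N, α and σ with the following property. For x ∈ Ω and s > 0 define ρ(x,s) := (d_Σ(x)^α d(x)^{−σ} s)^{1/(N−σ)} if s ≤ d(x)^N d_Σ(x)^{−α}; ρ(x,s) := (d_Σ(x)^α s)^{1/N} if d(x)^N d_Σ(x)^{−α} < s ≤ d_Σ(x)^{N−α}; and ρ(x,s) := s^{1/(N−α)} if d_Σ(x)^{N−α} < s ≤ (4 diam(Ω))^{N−α}. Then for every x ∈ Ω and every s with 0 < s ≤ (4 diam(Ω))^{N−α}: { y ∈ Ω : 0 < |x−y| ≤ C₁ ρ(x,s) } ⊆ { y ∈ Ω : y ≠ x and 𝒩_{α,σ}(y,x)^{−1} ≤ s } ⊆ { y ∈ Ω : 0 < |x−y| ≤ C₂ ρ(x,s) }. -/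
open MeasureTheory Set Metric

/-- The comparison radius `ρ(x,s)` of Statement 7, defined piecewise according to the
size of `s` relative to `d(x)^N d_Σ(x)^{−α}` and `d_Σ(x)^{N−α}`. -/
noncomputable def rhoAux (N : ℕ) (α σ : ℝ) (Ω S : Set (EuclideanSpace ℝ (Fin N)))
    (x : EuclideanSpace ℝ (Fin N)) (s : ℝ) : ℝ :=
  if s ≤ infDist x (frontier Ω) ^ (N : ℝ) * infDist x S ^ (-α) then
    (infDist x S ^ α * infDist x (frontier Ω) ^ (-σ) * s) ^ (1 / ((N : ℝ) - σ))
  else if s ≤ infDist x S ^ ((N : ℝ) - α) then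
    (infDist x S ^ α * s) ^ (1 / (N : ℝ))
  else s ^ (1 / ((N : ℝ) - α))

/-- A power of a ratio in `[1/2, 2]` is at most `2^|e|`. -/
lemma aux_two_bound {t e : ℝ} (h0 : 0 < t) (h1 : 1/2 ≤ t) (h2 : t ≤ 2) : t ^ e ≤ 2 ^ |e| := by
  rcases le_or_gt 0 e with he | he
  · calc t ^ e ≤ 2 ^ e := Real.rpow_le_rpow h0.le h2 he
      _ ≤ 2 ^ |e| := Real.rpow_le_rpow_of_exponent_le one_le_two (le_abs_self e)
  · calc t ^ e ≤ (1/2 : ℝ) ^ e := Real.rpow_le_rpow_of_nonpos (by norm_num) h1 he.le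
      _ = 2 ^ (-e) := by
          rw [one_div, ← Real.rpow_neg_one 2, ← Real.rpow_mul (by norm_num)]
          ring_nf
      _ = 2 ^ |e| := by rw [abs_of_neg he]

/-- If `u ≤ v ≤ 2u` then `v^e` and `u^e` are comparable within factor `2^|e|`. -/
lemma aux_ratio {u v e : ℝ} (hu : 0 < u) (h1 : u ≤ v) (h2 : v ≤ 2*u) :
    v ^ e ≤ 2 ^ |e| * u ^ e ∧ u ^ e ≤ 2 ^ |e| * v ^ e := by
  have hv : 0 < v := lt_of_lt_of_le hu h1
  constructor
  · have hveq : v = u * (v/u) := by field_simp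
    rw [hveq, Real.mul_rpow hu.le (by positivity)]
    rw [mul_comm (2 ^ |e|) (u ^ e)]
    refine mul_le_mul_of_nonneg_left ?_ (by positivity)
    exact aux_two_bound (by positivity) (by rw [le_div_iff₀ hu]; linarith)
      (by rw [div_le_iff₀ hu]; linarith)
  · have hueq : u = v * (u/v) := by field_simp
    rw [hueq, Real.mul_rpow hv.le (by positivity)]
    rw [mul_comm (2 ^ |e|) (v ^ e)]
    refine mul_le_mul_of_nonneg_left ?_ (by positivity)
    refine aux_two_bound (by positivity) ?_ ?_
    · rw [le_div_iff₀ hv]; linarith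
    · rw [div_le_iff₀ hv]; linarith

/-- Scaling/monotonicity of `F(r) = r^(n-σ) (max r D)^σ (max r Db)^(-α)`:
`F(r') ≥ (r'/r)^p F(r)` with `p = min (n-σ) (n-α)`, when `0 < D ≤ Db`. -/
lemma aux_scale {n α σ D Db r r' : ℝ} (hσ : 0 ≤ σ) (hD : 0 < D) (hDD : D ≤ Db)
    (hr : 0 < r) (hrr : r ≤ r') :
    (r'/r) ^ min (n - σ) (n - α) * (r ^ (n - σ) * (max r D) ^ σ * (max r Db) ^ (-α))
      ≤ r' ^ (n - σ) * (max r' D) ^ σ * (max r' Db) ^ (-α) := by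
  have hr' : 0 < r' := lt_of_lt_of_le hr hrr
  set a := max r D with ha
  set a' := max r' D with ha'
  set b := max r Db with hb
  set b' := max r' Db with hb'
  have hap : 0 < a := lt_of_lt_of_le hD (le_max_right _ _)
  have ha'p : 0 < a' := lt_of_lt_of_le hD (le_max_right _ _)
  have hbp : 0 < b := lt_of_lt_of_le (lt_of_lt_of_le hD hDD) (le_max_right _ _)
  have hb'p : 0 < b' := lt_of_lt_of_le (lt_of_lt_of_le hD hDD) (le_max_right _ _)
  set l := r'/r with hl
  set A := a'/a with hA
  set B := b'/b with hB
  have hl1 : 1 ≤ l := (one_le_div hr).mpr hrr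
  have haa : a ≤ a' := max_le_max hrr le_rfl
  have hbb : b ≤ b' := max_le_max hrr le_rfl
  have hA1 : 1 ≤ A := (one_le_div hap).mpr haa
  have hB1 : 1 ≤ B := (one_le_div hbp).mpr hbb
  -- B ≤ A : b' * a ≤ a' * b
  have hBA : B ≤ A := by
    rw [hB, hA, div_le_div_iff₀ hbp hap]
    rcases le_total r' Db with h | h
    · have h2 : r ≤ Db := le_trans hrr h
      have e1 : b' = Db := max_eq_right h
      have e2 : b = Db := max_eq_right h2
      rw [e1, e2]
      rw [mul_comm a' Db]; exact mul_le_mul_of_nonneg_left haa (le_of_lt (lt_of_lt_of_le hD hDD))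
    · have e1 : b' = r' := max_eq_left h
      have e2 : a' = r' := max_eq_left (le_trans hDD h)
      rw [e1, e2]
      exact mul_le_mul_of_nonneg_left (max_le_max le_rfl hDD) hr'.le
  -- A ≤ l : a' * r ≤ r' * a
  have hAl : A ≤ l := by
    rw [hA, hl, div_le_div_iff₀ hap hr]
    rcases le_total r' D with h | h
    · have e1 : a' = D := max_eq_right h
      have e2 : a = D := max_eq_right (le_trans hrr h)
      rw [e1, e2, mul_comm r' D]
      exact mul_le_mul_of_nonneg_left hrr hD.le
    · have e1 : a' = r' := max_eq_left h
      rw [e1]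
      exact mul_le_mul_of_nonneg_left (le_max_left _ _) hr'.le
  have hlp : 0 < l := lt_of_lt_of_le one_pos hl1
  have hAp : 0 < A := lt_of_lt_of_le one_pos hA1
  have hBp : 0 < B := lt_of_lt_of_le one_pos hB1
  -- rewrite r' = l*r etc.
  have er : r' = l * r := by rw [hl]; field_simp
  have ea : a' = A * a := by rw [hA]; field_simp
  have eb : b' = B * b := by rw [hB]; field_simp
  rw [er, ea, eb, Real.mul_rpow hlp.le hr.le, Real.mul_rpow hAp.le hap.le,
    Real.mul_rpow hBp.le hbp.le]
  have key : l ^ min (n - σ) (n - α) ≤ l ^ (n - σ) * A ^ σ * B ^ (-α) := by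
    rcases le_or_gt 0 α with hα0 | hα0
    · have h1 : A ^ (-α) ≤ B ^ (-α) :=
        Real.rpow_le_rpow_of_nonpos hBp hBA (by linarith)
      have h2 : l ^ (n - σ) * A ^ σ * A ^ (-α) ≤ l ^ (n - σ) * A ^ σ * B ^ (-α) :=
        mul_le_mul_of_nonneg_left h1 (by positivity)
      refine le_trans ?_ h2
      rw [mul_assoc, ← Real.rpow_add hAp]
      rcases le_total α σ with has | has
      · have h3 : (1:ℝ) ≤ A ^ (σ + -α) := by
          calc (1:ℝ) = A ^ (0:ℝ) := (Real.rpow_zero A).symm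
            _ ≤ A ^ (σ + -α) := Real.rpow_le_rpow_of_exponent_le hA1 (by linarith)
        calc l ^ min (n - σ) (n - α) ≤ l ^ (n - σ) :=
              Real.rpow_le_rpow_of_exponent_le hl1 (min_le_left _ _)
          _ = l ^ (n - σ) * 1 := (mul_one _).symm
          _ ≤ l ^ (n - σ) * A ^ (σ + -α) := mul_le_mul_of_nonneg_left h3 (by positivity)
      · have h3 : l ^ (σ + -α) ≤ A ^ (σ + -α) :=
          Real.rpow_le_rpow_of_nonpos hAp hAl (by linarith)
        calc l ^ min (n - σ) (n - α) ≤ l ^ (n - α) :=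
              Real.rpow_le_rpow_of_exponent_le hl1 (min_le_right _ _)
          _ = l ^ (n - σ) * l ^ (σ + -α) := by
              rw [← Real.rpow_add hlp]; ring_nf
          _ ≤ l ^ (n - σ) * A ^ (σ + -α) := mul_le_mul_of_nonneg_left h3 (by positivity)
    · have h1 : (1:ℝ) ≤ A ^ σ := by
        calc (1:ℝ) = A ^ (0:ℝ) := (Real.rpow_zero A).symm
          _ ≤ A ^ σ := Real.rpow_le_rpow_of_exponent_le hA1 hσ
      have h2 : (1:ℝ) ≤ B ^ (-α) := by
        calc (1:ℝ) = B ^ (0:ℝ) := (Real.rpow_zero B).symm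
          _ ≤ B ^ (-α) := Real.rpow_le_rpow_of_exponent_le hB1 (by linarith)
      calc l ^ min (n - σ) (n - α) ≤ l ^ (n - σ) :=
            Real.rpow_le_rpow_of_exponent_le hl1 (min_le_left _ _)
        _ = l ^ (n - σ) * 1 * 1 := by ring
        _ ≤ l ^ (n - σ) * A ^ σ * B ^ (-α) := by
            refine mul_le_mul (mul_le_mul_of_nonneg_left h1 (by positivity)) h2 one_pos.le
              (by positivity)
  calc l ^ min (n - σ) (n - α) * (r ^ (n - σ) * a ^ σ * b ^ (-α))
      ≤ (l ^ (n - σ) * A ^ σ * B ^ (-α)) * (r ^ (n - σ) * a ^ σ * b ^ (-α)) :=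
        mul_le_mul_of_nonneg_right key (by positivity)
    _ = l ^ (n - σ) * r ^ (n - σ) * (A ^ σ * a ^ σ) * (B ^ (-α) * b ^ (-α)) := by ring

/-- The comparison radius satisfies `F(ρ(x,s)) = s` where
`F(r) = r^(N-σ) (max r d(x))^σ (max r d_Σ(x))^(-α)`. -/
lemma aux_rho {N : ℕ} (α σ : ℝ) (Ω S : Set (EuclideanSpace ℝ (Fin N)))
    (x : EuclideanSpace ℝ (Fin N)) (s : ℝ)
    (hD : 0 < infDist x (frontier Ω)) (hDD : infDist x (frontier Ω) ≤ infDist x S)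
    (hs : 0 < s) (h1 : 0 < (N : ℝ) - σ) (h2 : 0 < (N : ℝ) - α) (h3 : (0:ℝ) < N) :
    0 < rhoAux N α σ Ω S x s ∧
      rhoAux N α σ Ω S x s ^ ((N : ℝ) - σ)
        * (max (rhoAux N α σ Ω S x s) (infDist x (frontier Ω))) ^ σ
        * (max (rhoAux N α σ Ω S x s) (infDist x S)) ^ (-α) = s := by
  set D := infDist x (frontier Ω) with hDdef
  set Db := infDist x S with hDbdef
  have hDb : 0 < Db := lt_of_lt_of_le hD hDD
  rw [rhoAux]
  split_ifs with c1 c2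
  · -- regime 1 : ρ = (Db^α * D^(-σ) * s)^(1/(N-σ)), ρ ≤ D
    set X := Db ^ α * D ^ (-σ) * s with hX
    have hXpos : 0 < X := by positivity
    set ρ := X ^ (1 / ((N : ℝ) - σ)) with hρ
    have hρpos : 0 < ρ := by positivity
    have hpow : ρ ^ ((N : ℝ) - σ) = X := by
      rw [hρ, one_div, Real.rpow_inv_rpow hXpos.le h1.ne']
    have hρD : ρ ≤ D := by
      have hXD : X ≤ D ^ ((N : ℝ) - σ) := by
        have : Db ^ α * D ^ (-σ) * (D ^ (N : ℝ) * Db ^ (-α)) = D ^ ((N : ℝ) - σ) := by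
          have e : Db ^ α * D ^ (-σ) * (D ^ (N : ℝ) * Db ^ (-α))
              = (Db ^ α * Db ^ (-α)) * (D ^ (-σ) * D ^ (N : ℝ)) := by ring
          rw [e, ← Real.rpow_add hDb, ← Real.rpow_add hD]
          norm_num
          rw [show -σ + (N : ℝ) = (N : ℝ) - σ by ring]
        calc X ≤ Db ^ α * D ^ (-σ) * (D ^ (N : ℝ) * Db ^ (-α)) := by
              refine mul_le_mul_of_nonneg_left c1 (by positivity)
          _ = D ^ ((N : ℝ) - σ) := this
      have := (Real.rpow_le_rpow_iff hρpos.le hD.le h1).mp (by rw [hpow]; exact hXD)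
      exact this
    have e1 : max ρ D = D := max_eq_right hρD
    have e2 : max ρ Db = Db := max_eq_right (le_trans hρD hDD)
    refine ⟨hρpos, ?_⟩
    rw [e1, e2, hpow, hX]
    have e : Db ^ α * D ^ (-σ) * s * D ^ σ * Db ^ (-α)
        = (Db ^ α * Db ^ (-α)) * (D ^ (-σ) * D ^ σ) * s := by ring
    rw [e, ← Real.rpow_add hDb, ← Real.rpow_add hD]
    norm_num
  · -- regime 2
    set X := Db ^ α * s with hX
    have hXpos : 0 < X := by positivity
    set ρ := X ^ (1 / (N : ℝ)) with hρ
    have hρpos : 0 < ρ := by positivity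
    have hpow : ρ ^ ((N : ℝ)) = X := by
      rw [hρ, one_div, Real.rpow_inv_rpow hXpos.le h3.ne']
    have hDρ : D ≤ ρ := by
      have hDX : D ^ ((N : ℝ)) ≤ X := by
        have e : D ^ ((N : ℝ)) = (D ^ ((N : ℝ)) * Db ^ (-α)) * Db ^ α := by
          rw [mul_assoc, ← Real.rpow_add hDb]; norm_num
        rw [e, hX, mul_comm (Db ^ α) s]
        exact mul_le_mul_of_nonneg_right (le_of_lt (not_le.mp c1)) (by positivity)
      exact (Real.rpow_le_rpow_iff hD.le hρpos.le h3).mp (by rw [hpow]; exact hDX)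
    have hρDb : ρ ≤ Db := by
      have hXDb : X ≤ Db ^ ((N : ℝ)) := by
        calc X ≤ Db ^ α * Db ^ ((N : ℝ) - α) := by
              exact mul_le_mul_of_nonneg_left c2 (by positivity)
          _ = Db ^ ((N : ℝ)) := by rw [← Real.rpow_add hDb]; ring_nf
      exact (Real.rpow_le_rpow_iff hρpos.le hDb.le h3).mp (by rw [hpow]; exact hXDb)
    have e1 : max ρ D = ρ := max_eq_left hDρ
    have e2 : max ρ Db = Db := max_eq_right hρDb
    refine ⟨hρpos, ?_⟩
    rw [e1, e2]
    have e : ρ ^ ((N : ℝ) - σ) * ρ ^ σ = ρ ^ ((N : ℝ)) := by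
      rw [← Real.rpow_add hρpos]; ring_nf
    rw [e, hpow, hX]
    have e' : Db ^ α * s * Db ^ (-α) = (Db ^ α * Db ^ (-α)) * s := by ring
    rw [e', ← Real.rpow_add hDb]; norm_num
  · -- regime 3
    set ρ := s ^ (1 / ((N : ℝ) - α)) with hρ
    have hρpos : 0 < ρ := by positivity
    have hpow : ρ ^ ((N : ℝ) - α) = s := by
      rw [hρ, one_div, Real.rpow_inv_rpow hs.le h2.ne']
    have hDbρ : Db ≤ ρ := by
      refine (Real.rpow_le_rpow_iff hDb.le hρpos.le h2).mp ?_
      rw [hpow]; exact (not_le.mp c2).le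
    have e1 : max ρ D = ρ := max_eq_left (le_trans hDD hDbρ)
    have e2 : max ρ Db = ρ := max_eq_left hDbρ
    refine ⟨hρpos, ?_⟩
    rw [e1, e2, ← Real.rpow_add hρpos, ← Real.rpow_add hρpos]
    rw [show (N : ℝ) - σ + σ + -α = (N : ℝ) - α by ring]
    exact hpow

/-- The inverse kernel is comparable to `F(dist y x)` within factor `2^(σ+|α|)`. -/
lemma aux_kernel {N : ℕ} (α σ : ℝ) (Ω S : Set (EuclideanSpace ℝ (Fin N)))
    (x y : EuclideanSpace ℝ (Fin N)) (hσ : 0 ≤ σ) (hr : 0 < dist y x) :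
    (NKernel N α σ Ω S y x)⁻¹ ≤ 2 ^ (σ + |α|) *
      (dist y x ^ ((N : ℝ) - σ) * (max (dist y x) (infDist x (frontier Ω))) ^ σ *
        (max (dist y x) (infDist x S)) ^ (-α)) ∧
    dist y x ^ ((N : ℝ) - σ) * (max (dist y x) (infDist x (frontier Ω))) ^ σ *
        (max (dist y x) (infDist x S)) ^ (-α)
      ≤ 2 ^ (σ + |α|) * (NKernel N α σ Ω S y x)⁻¹ := by
  set r := dist y x with hrdef
  set D := infDist x (frontier Ω) with hDdef
  set Dy := infDist y (frontier Ω) with hDydef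
  set Db := infDist x S with hDbdef
  set Dby := infDist y S with hDbydef
  have hD0 : 0 ≤ D := infDist_nonneg
  have hDy0 : 0 ≤ Dy := infDist_nonneg
  have hDb0 : 0 ≤ Db := infDist_nonneg
  have hDby0 : 0 ≤ Dby := infDist_nonneg
  set m := max r D with hm
  set mb := max r Db with hmb
  set Md := max r (max Dy D) with hMd
  set MΩ := max r (max Dby Db) with hMΩ
  have hmp : 0 < m := lt_of_lt_of_le hr (le_max_left _ _)
  have hmbp : 0 < mb := lt_of_lt_of_le hr (le_max_left _ _)
  have hlipd : Dy ≤ D + r := infDist_le_infDist_add_dist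
  have hlipb : Dby ≤ Db + r := infDist_le_infDist_add_dist
  have hmMd : m ≤ Md := max_le_max le_rfl (le_max_right _ _)
  have hMd2 : Md ≤ 2 * m := by
    refine max_le (by nlinarith [le_max_left r D]) (max_le ?_ ?_)
    · have h1 : D ≤ m := le_max_right _ _
      have h2 : r ≤ m := le_max_left _ _
      linarith
    · have h1 : D ≤ m := le_max_right _ _
      linarith
  have hmMb : mb ≤ MΩ := max_le_max le_rfl (le_max_right _ _)
  have hMb2 : MΩ ≤ 2 * mb := by
    refine max_le (by nlinarith [le_max_left r Db]) (max_le ?_ ?_)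
    · have h1 : Db ≤ mb := le_max_right _ _
      have h2 : r ≤ mb := le_max_left _ _
      linarith
    · have h1 : Db ≤ mb := le_max_right _ _
      linarith
  have hMdp : 0 < Md := lt_of_lt_of_le hmp hmMd
  have hMΩp : 0 < MΩ := lt_of_lt_of_le hmbp hmMb
  -- the inverse kernel as a product
  have hKinv : (NKernel N α σ Ω S y x)⁻¹ = r ^ ((N : ℝ) - σ) * Md ^ σ * MΩ ^ (-α) := by
    rw [NKernel, inv_div, Real.rpow_neg hMΩp.le, div_eq_mul_inv]
  obtain ⟨hd1, hd2⟩ := aux_ratio hmp hmMd hMd2 (e := σ)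
  obtain ⟨hb1, hb2⟩ := aux_ratio hmbp hmMb hMb2 (e := -α)
  have habsσ : |σ| = σ := abs_of_nonneg hσ
  have habsα : |(-α)| = |α| := abs_neg α
  rw [habsσ] at hd1 hd2
  rw [habsα] at hb1 hb2
  have hfact : (2:ℝ) ^ σ * 2 ^ |α| = 2 ^ (σ + |α|) := (Real.rpow_add two_pos σ |α|).symm
  constructor
  · rw [hKinv]
    calc r ^ ((N : ℝ) - σ) * Md ^ σ * MΩ ^ (-α)
        ≤ r ^ ((N : ℝ) - σ) * (2 ^ σ * m ^ σ) * MΩ ^ (-α) := by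
          refine mul_le_mul_of_nonneg_right (mul_le_mul_of_nonneg_left hd1 (by positivity))
            (by positivity)
      _ ≤ r ^ ((N : ℝ) - σ) * (2 ^ σ * m ^ σ) * (2 ^ |α| * mb ^ (-α)) := by
          refine mul_le_mul_of_nonneg_left hb1 (by positivity)
      _ = (2 ^ σ * 2 ^ |α|) * (r ^ ((N : ℝ) - σ) * m ^ σ * mb ^ (-α)) := by ring
      _ = 2 ^ (σ + |α|) * (r ^ ((N : ℝ) - σ) * m ^ σ * mb ^ (-α)) := by rw [hfact]
  · rw [hKinv]
    calc r ^ ((N : ℝ) - σ) * m ^ σ * mb ^ (-α)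
        ≤ r ^ ((N : ℝ) - σ) * (2 ^ σ * Md ^ σ) * mb ^ (-α) := by
          refine mul_le_mul_of_nonneg_right (mul_le_mul_of_nonneg_left hd2 (by positivity))
            (by positivity)
      _ ≤ r ^ ((N : ℝ) - σ) * (2 ^ σ * Md ^ σ) * (2 ^ |α| * MΩ ^ (-α)) := by
          refine mul_le_mul_of_nonneg_left hb2 (by positivity)
      _ = (2 ^ σ * 2 ^ |α|) * (r ^ ((N : ℝ) - σ) * Md ^ σ * MΩ ^ (-α)) := by ring
      _ = 2 ^ (σ + |α|) * (r ^ ((N : ℝ) - σ) * Md ^ σ * MΩ ^ (-α)) := by rw [hfact]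

/-- Quasi-balls of `𝒩_{α,σ}⁻¹` are comparable to Euclidean balls of
radius `ρ(x,s)`. -/
theorem stmt_7 {N : ℕ} (hN : 3 ≤ N) (Ω S : Set (EuclideanSpace ℝ (Fin N)))
    (hΩo : IsOpen Ω) (hΩb : Bornology.IsBounded Ω)
    (hS : S ⊆ frontier Ω) (hSne : S.Nonempty) (hSc : IsCompact S)
    (α σ : ℝ) (hα : α < N) (hσ0 : 0 < σ) (hσN : σ < N) :
    ∃ C₁ > 0, ∃ C₂ > 0, ∀ x ∈ Ω, ∀ s : ℝ, 0 < s → s ≤ (4 * diam Ω) ^ ((N : ℝ) - α) →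
      {y ∈ Ω | 0 < dist x y ∧ dist x y ≤ C₁ * rhoAux N α σ Ω S x s} ⊆
        {y ∈ Ω | y ≠ x ∧ (NKernel N α σ Ω S y x)⁻¹ ≤ s} ∧
      {y ∈ Ω | y ≠ x ∧ (NKernel N α σ Ω S y x)⁻¹ ≤ s} ⊆
        {y ∈ Ω | 0 < dist x y ∧ dist x y ≤ C₂ * rhoAux N α σ Ω S x s} := by
  have hn3 : (3:ℝ) ≤ (N : ℝ) := by exact_mod_cast hN
  have hns : 0 < (N : ℝ) - σ := by linarith
  have hnα : 0 < (N : ℝ) - α := by linarith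
  have hn0 : (0:ℝ) < N := by linarith
  set p := min ((N : ℝ) - σ) ((N : ℝ) - α) with hp
  have hppos : 0 < p := lt_min hns hnα
  set c₀ := (2:ℝ) ^ (σ + |α|) with hc
  have hcpos : 0 < c₀ := by positivity
  have hc1 : (1:ℝ) ≤ c₀ := by
    calc (1:ℝ) = 2 ^ (0:ℝ) := (Real.rpow_zero 2).symm
      _ ≤ 2 ^ (σ + |α|) := Real.rpow_le_rpow_of_exponent_le one_le_two (by positivity)
  refine ⟨c₀ ^ (-(1/p)), by positivity, c₀ ^ (1/p), by positivity, ?_⟩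
  intro x hx s hs _hs4
  -- constants
  have hC1pow : (c₀ ^ (-(1/p))) ^ p = c₀⁻¹ := by
    rw [← Real.rpow_mul hcpos.le]
    rw [show -(1/p) * p = -1 by field_simp]
    exact Real.rpow_neg_one c₀
  have hC2pow : (c₀ ^ (1/p)) ^ p = c₀ := by
    rw [← Real.rpow_mul hcpos.le]
    rw [show (1/p) * p = 1 by field_simp]
    exact Real.rpow_one c₀
  have hC1le1 : c₀ ^ (-(1/p)) ≤ 1 :=
    Real.rpow_le_one_of_one_le_of_nonpos hc1 (neg_nonpos.mpr (by positivity))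
  have hC2ge1 : (1:ℝ) ≤ c₀ ^ (1/p) := by
    calc (1:ℝ) = c₀ ^ (0:ℝ) := (Real.rpow_zero c₀).symm
      _ ≤ c₀ ^ (1/p) := Real.rpow_le_rpow_of_exponent_le hc1 (by positivity)
  have hC1pos : 0 < c₀ ^ (-(1/p)) := by positivity
  have hC2pos : 0 < c₀ ^ (1/p) := by positivity
  have hC1inv : (c₀ ^ (-(1/p)))⁻¹ = c₀ ^ (1/p) := by
    rw [← Real.rpow_neg hcpos.le]; norm_num
  -- geometric facts about x
  have hFne : (frontier Ω).Nonempty := hSne.mono hS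
  have hxnot : x ∉ frontier Ω := by
    rw [hΩo.frontier_eq]
    exact fun h => h.2 hx
  have hxD : 0 < infDist x (frontier Ω) :=
    (isClosed_frontier.notMem_iff_infDist_pos hFne).mp hxnot
  have hDD : infDist x (frontier Ω) ≤ infDist x S :=
    infDist_le_infDist_of_subset hS hSne
  obtain ⟨hρpos, hFρ⟩ := aux_rho α σ Ω S x s hxD hDD hs hns hnα hn0
  set ρ := rhoAux N α σ Ω S x s with hρdef
  constructor
  · -- first inclusion
    intro y hy
    simp only [Set.mem_setOf_eq] at hy ⊢
    obtain ⟨hyΩ, hdpos, hdle⟩ := hy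
    have hr : 0 < dist y x := by rw [dist_comm]; exact hdpos
    refine ⟨hyΩ, (dist_pos.mp hr), ?_⟩
    obtain ⟨hK1, _⟩ := aux_kernel α σ Ω S x y hσ0.le hr
    have hrρ : dist y x ≤ ρ := by
      rw [dist_comm]
      calc dist x y ≤ c₀ ^ (-(1/p)) * ρ := hdle
        _ ≤ 1 * ρ := mul_le_mul_of_nonneg_right hC1le1 hρpos.le
        _ = ρ := one_mul ρ
    have hscale := aux_scale (n := (N : ℝ)) (α := α) (σ := σ) hσ0.le hxD hDD hr hrρ
    rw [hFρ] at hscale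
    -- c₀ ≤ (ρ / dist y x) ^ p
    have hratio : c₀ ≤ (ρ / dist y x) ^ p := by
      have h1C : c₀ ^ (1/p) ≤ ρ / dist y x := by
        rw [le_div_iff₀ hr]
        have := hdle
        rw [dist_comm x y] at this
        calc c₀ ^ (1/p) * dist y x ≤ c₀ ^ (1/p) * (c₀ ^ (-(1/p)) * ρ) :=
              mul_le_mul_of_nonneg_left this (by positivity)
          _ = (c₀ ^ (1/p) * c₀ ^ (-(1/p))) * ρ := by ring
          _ = ρ := by rw [← Real.rpow_add hcpos]; norm_num
      calc c₀ = (c₀ ^ (1/p)) ^ p := hC2pow.symm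
        _ ≤ (ρ / dist y x) ^ p := Real.rpow_le_rpow (by positivity) h1C hppos.le
    have hF0 : 0 ≤ dist y x ^ ((N : ℝ) - σ)
        * (max (dist y x) (infDist x (frontier Ω))) ^ σ
        * (max (dist y x) (infDist x S)) ^ (-α) := by positivity
    calc (NKernel N α σ Ω S y x)⁻¹
        ≤ c₀ * (dist y x ^ ((N : ℝ) - σ)
            * (max (dist y x) (infDist x (frontier Ω))) ^ σ
            * (max (dist y x) (infDist x S)) ^ (-α)) := hK1
      _ ≤ (ρ / dist y x) ^ p * (dist y x ^ ((N : ℝ) - σ)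
            * (max (dist y x) (infDist x (frontier Ω))) ^ σ
            * (max (dist y x) (infDist x S)) ^ (-α)) :=
          mul_le_mul_of_nonneg_right hratio hF0
      _ ≤ s := hscale
  · -- second inclusion
    intro y hy
    simp only [Set.mem_setOf_eq] at hy ⊢
    obtain ⟨hyΩ, hyne, hKs⟩ := hy
    have hr : 0 < dist y x := dist_pos.mpr hyne
    have hdpos : 0 < dist x y := by rw [dist_comm]; exact hr
    refine ⟨hyΩ, hdpos, ?_⟩
    by_contra hcon
    push_neg at hcon
    have hcon' : c₀ ^ (1/p) * ρ < dist y x := by rw [dist_comm]; exact hcon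
    obtain ⟨_, hK2⟩ := aux_kernel α σ Ω S x y hσ0.le hr
    have hρr : ρ ≤ dist y x := by
      calc ρ = 1 * ρ := (one_mul ρ).symm
        _ ≤ c₀ ^ (1/p) * ρ := mul_le_mul_of_nonneg_right hC2ge1 hρpos.le
        _ ≤ dist y x := hcon'.le
    have hscale := aux_scale (n := (N : ℝ)) (α := α) (σ := σ) hσ0.le hxD hDD hρpos hρr
    rw [hFρ] at hscale
    have hratio : c₀ < (dist y x / ρ) ^ p := by
      have h1C : c₀ ^ (1/p) < dist y x / ρ := by
        rw [lt_div_iff₀ hρpos]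
        exact hcon'
      calc c₀ = (c₀ ^ (1/p)) ^ p := hC2pow.symm
        _ < (dist y x / ρ) ^ p := Real.rpow_lt_rpow (by positivity) h1C hppos
    have hup : dist y x ^ ((N : ℝ) - σ)
        * (max (dist y x) (infDist x (frontier Ω))) ^ σ
        * (max (dist y x) (infDist x S)) ^ (-α) ≤ c₀ * s := by
      calc dist y x ^ ((N : ℝ) - σ)
          * (max (dist y x) (infDist x (frontier Ω))) ^ σ
          * (max (dist y x) (infDist x S)) ^ (-α)
          ≤ c₀ * (NKernel N α σ Ω S y x)⁻¹ := hK2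
        _ ≤ c₀ * s := mul_le_mul_of_nonneg_left hKs hcpos.le
    have hlow : c₀ * s < dist y x ^ ((N : ℝ) - σ)
        * (max (dist y x) (infDist x (frontier Ω))) ^ σ
        * (max (dist y x) (infDist x S)) ^ (-α) := by
      calc c₀ * s < (dist y x / ρ) ^ p * s :=
            mul_lt_mul_of_pos_right hratio hs
        _ ≤ dist y x ^ ((N : ℝ) - σ)
            * (max (dist y x) (infDist x (frontier Ω))) ^ σ
            * (max (dist y x) (infDist x S)) ^ (-α) := hscale
    linarith
end
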